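/- arXiv:1403.4899 — 5 statements merged into one kernel-verified Lean document; each statement's English description precedes it below -/
import Mathlib

section
/- (SCS paths are not length minimisers) Let X and Y be unit vectors in ℝ², x, y ∈ ℝ², and let γ : [0,s] → ℝ² be a path in Γ((x,X),(y,Y)) consisting of a line segment, an arc of a unit circle, and a line segment, all of positive length: there exist 0 = t₀ < t₁ < t₂ < t₃ = s and a sign ε ∈ {−1,+1} such that γ'' = 0 on [t₀,t₁], γ'' = ε·J∘γ' on [t₁,t₂], and γ'' = 0 on [t₂,t₃]. Then γ is not a length minimiser: there exists β ∈ Γ((x,X),(y,Y)) with L(β) < L(γ). -/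
open Set

noncomputable section

/-- The Euclidean plane. -/
abbrev Plane := EuclideanSpace ℝ (Fin 2)

/-- Rotation by π/2: J(a,b) = (−b,a). -/
def J (v : Plane) : Plane := WithLp.toLp 2 ![-(v 1), v 0]

/-- A bounded curvature path (curvature bound normalized to κ = 1):
a map `toFun : [0, len] → ℝ²` which is C¹ (with derivative `dir`), is
parametrized by arc length, and is piecewise C² with ‖γ''‖ ≤ 1 on each piece. -/
structure BCPath where
  len : ℝ
  len_nonneg : 0 ≤ len
  toFun : ℝ → Plane
  dir : ℝ → Plane
  hasDeriv : ∀ t ∈ Icc 0 len, HasDerivWithinAt toFun (dir t) (Icc 0 len) t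
  contDir : ContinuousOn dir (Icc 0 len)
  unitSpeed : ∀ t ∈ Icc 0 len, ‖dir t‖ = 1
  piecewiseC2 : ∃ (n : ℕ) (u : ℕ → ℝ), u 0 = 0 ∧ u n = len ∧ (∀ i < n, u i ≤ u (i + 1)) ∧
    ∀ i < n, ∃ acc : ℝ → Plane, ContinuousOn acc (Icc (u i) (u (i + 1))) ∧
      ∀ t ∈ Icc (u i) (u (i + 1)),
        HasDerivWithinAt dir (acc t) (Icc (u i) (u (i + 1))) t ∧ ‖acc t‖ ≤ 1

/-- Membership in Γ((x,X),(y,Y)): the path starts at x with direction X and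
ends at y with direction Y. -/
def InGamma (p : BCPath) (x X y Y : Plane) : Prop :=
  p.toFun 0 = x ∧ p.dir 0 = X ∧ p.toFun p.len = y ∧ p.dir p.len = Y

/-- On `[a,b]` the path has signed curvature κ: γ'' = κ·J∘γ' there
(an arc of a unit circle when κ = ±1, a line segment when κ = 0). -/
def ArcOn (p : BCPath) (κ : ℝ) (a b : ℝ) : Prop :=
  ∀ t ∈ Icc a b, HasDerivWithinAt p.dir (κ • J (p.dir t)) (Icc a b) t

/-- On `[a,b]` the path is a line segment: γ'' = 0 there. -/
def SegmentOn (p : BCPath) (a b : ℝ) : Prop :=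
  ∀ t ∈ Icc a b, HasDerivWithinAt p.dir 0 (Icc a b) t


namespace SCSAux

open Real

lemma J_apply0 (v : Plane) : J v 0 = -(v 1) := rfl
lemma J_apply1 (v : Plane) : J v 1 = v 0 := rfl

lemma J_add (v w : Plane) : J (v + w) = J v + J w := by
  ext i; fin_cases i <;>
    simp [J, PiLp.add_apply] <;> ring

lemma J_smul (c : ℝ) (v : Plane) : J (c • v) = c • J v := by
  ext i; fin_cases i <;>
    simp [J, PiLp.smul_apply] <;> ring

lemma J_J (v : Plane) : J (J v) = -v := by
  ext i; fin_cases i <;> simp [J, PiLp.neg_apply]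

lemma J_sub (v w : Plane) : J (v - w) = J v - J w := by
  ext i; fin_cases i <;>
    simp [J, PiLp.sub_apply] <;> ring

lemma norm_J (v : Plane) : ‖J v‖ = ‖v‖ := by
  rw [EuclideanSpace.norm_eq, EuclideanSpace.norm_eq]
  congr 1
  rw [Fin.sum_univ_two, Fin.sum_univ_two]
  simp [J]
  ring

lemma inner_J (v : Plane) : (inner ℝ v (J v) : ℝ) = 0 := by
  rw [PiLp.inner_apply, Fin.sum_univ_two]
  simp [J]
  ring

lemma norm_combo {X W : Plane} (hX : ‖X‖ = 1) (hW : ‖W‖ = 1)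
    (hXW : (inner ℝ X W : ℝ) = 0) {p q : ℝ} (hpq : p^2 + q^2 = 1) :
    ‖p • X + q • W‖ = 1 := by
  have h2 : ‖p • X + q • W‖^2 = 1 := by
    rw [norm_add_sq_real, norm_smul, norm_smul, real_inner_smul_left, real_inner_smul_right,
      hXW, hX, hW]
    simp [mul_pow, sq_abs]
    nlinarith
  nlinarith [norm_nonneg (p • X + q • W)]

def uvec (X W : Plane) (α : ℝ) : Plane := cos α • X + sin α • W
def vvec (X W : Plane) (α : ℝ) : Plane := (-sin α) • X + cos α • W

lemma uvec_zero (X W : Plane) : uvec X W 0 = X := by simp [uvec]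

lemma norm_uvec {X W : Plane} (hX : ‖X‖ = 1) (hW : ‖W‖ = 1)
    (hXW : (inner ℝ X W : ℝ) = 0) (α : ℝ) : ‖uvec X W α‖ = 1 :=
  norm_combo hX hW hXW (by rw [← sin_sq_add_cos_sq α]; ring)

lemma norm_vvec {X W : Plane} (hX : ‖X‖ = 1) (hW : ‖W‖ = 1)
    (hXW : (inner ℝ X W : ℝ) = 0) (α : ℝ) : ‖vvec X W α‖ = 1 :=
  norm_combo hX hW hXW (by rw [← sin_sq_add_cos_sq α]; ring)

lemma hasDerivAt_affine (c ω t : ℝ) : HasDerivAt (fun s : ℝ => c + ω * s) ω t := by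
  simpa using ((hasDerivAt_id t).const_mul ω).const_add c

lemma hasDerivAt_uvec (X W : Plane) (c ω t : ℝ) :
    HasDerivAt (fun s => uvec X W (c + ω * s)) (ω • vvec X W (c + ω * t)) t := by
  have h1 := hasDerivAt_affine c ω t
  have hc : HasDerivAt (fun s : ℝ => cos (c + ω * s)) (-sin (c + ω * t) * ω) t :=
    (Real.hasDerivAt_cos (c + ω * t)).comp (h₂ := Real.cos) t h1
  have hs : HasDerivAt (fun s : ℝ => sin (c + ω * s)) (cos (c + ω * t) * ω) t :=
    (Real.hasDerivAt_sin (c + ω * t)).comp (h₂ := Real.sin) t h1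
  have := (hc.smul_const X).add (hs.smul_const W)
  refine this.congr_deriv ?_
  simp only [vvec]
  module

lemma continuous_uvec_comp {X W : Plane} {f : ℝ → ℝ} (hf : Continuous f) :
    Continuous (fun t => uvec X W (f t)) := by
  unfold uvec
  exact ((Real.continuous_cos.comp hf).smul continuous_const).add
    ((Real.continuous_sin.comp hf).smul continuous_const)

lemma integral_uvec (X W : Plane) (c ω : ℝ) (hω : ω ≠ 0) (p q : ℝ) :
    ∫ t in p..q, uvec X W (c + ω * t) =
      ω⁻¹ • ((sin (c + ω * q) - sin (c + ω * p)) • X +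
        (cos (c + ω * p) - cos (c + ω * q)) • W) := by
  have key : ∀ t ∈ uIcc p q, HasDerivAt
      (fun s => ω⁻¹ • ((sin (c + ω * s)) • X - (cos (c + ω * s)) • W))
      (uvec X W (c + ω * t)) t := by
    intro t _
    have h1 := hasDerivAt_affine c ω t
    have hc : HasDerivAt (fun s : ℝ => cos (c + ω * s)) (-sin (c + ω * t) * ω) t :=
      (Real.hasDerivAt_cos (c + ω * t)).comp (h₂ := Real.cos) t h1
    have hs : HasDerivAt (fun s : ℝ => sin (c + ω * s)) (cos (c + ω * t) * ω) t :=
      (Real.hasDerivAt_sin (c + ω * t)).comp (h₂ := Real.sin) t h1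
    have := ((hs.smul_const X).sub (hc.smul_const W)).const_smul ω⁻¹
    refine this.congr_deriv ?_
    have e1 : ω⁻¹ * (cos (c + ω * t) * ω) = cos (c + ω * t) := by field_simp
    have e2 : ω⁻¹ * (-sin (c + ω * t) * ω) = -sin (c + ω * t) := by field_simp
    simp only [uvec, smul_sub, ← smul_assoc, smul_eq_mul, e1, e2]
    module
  have hint : IntervalIntegrable (fun t => uvec X W (c + ω * t)) MeasureTheory.volume p q :=
    (continuous_uvec_comp (by continuity)).intervalIntegrable p q
  rw [intervalIntegral.integral_eq_sub_of_hasDerivAt key hint]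
  rw [← smul_sub]
  congr 1
  module

lemma integral_uvec_const (X W : Plane) (c : ℝ) (p q : ℝ) :
    ∫ t in p..q, uvec X W c = (q - p) • uvec X W c := by
  simp [intervalIntegral.integral_const]


end SCSAux

namespace SCSAux
open Real

/-! ### Piecewise-constant-curvature template paths (5 pieces) -/

def clamp (L t : ℝ) : ℝ := min (max t 0) L

lemma clamp_nonpos {L t : ℝ} (hL : 0 ≤ L) (h : t ≤ 0) : clamp L t = 0 := by
  unfold clamp
  rw [max_eq_right h, min_eq_left hL]

lemma clamp_ge {L t : ℝ} (hL : 0 ≤ L) (h : L ≤ t) : clamp L t = L := by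
  unfold clamp
  rw [max_eq_left (hL.trans h), min_eq_right h]

lemma clamp_mem {L t : ℝ} (h0 : 0 ≤ t) (hL : t ≤ L) : clamp L t = t := by
  unfold clamp
  rw [max_eq_left h0, min_eq_left hL]

lemma continuous_clamp (L : ℝ) : Continuous (clamp L) :=
  (continuous_id.max continuous_const).min continuous_const

section template

variable (x X W : Plane) (ℓ₁ ℓ₂ ℓ₃ ℓ₄ ℓ₅ ω₂ ω₃ ω₄ : ℝ)

def phi (t : ℝ) : ℝ :=
  ω₂ * clamp ℓ₂ (t - ℓ₁) + ω₃ * clamp ℓ₃ (t - (ℓ₁ + ℓ₂)) + ω₄ * clamp ℓ₄ (t - (ℓ₁ + ℓ₂ + ℓ₃))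

def bdir (t : ℝ) : Plane := uvec X W (phi ℓ₁ ℓ₂ ℓ₃ ℓ₄ ω₂ ω₃ ω₄ t)

def bpos (t : ℝ) : Plane := x + ∫ s in (0:ℝ)..t, bdir X W ℓ₁ ℓ₂ ℓ₃ ℓ₄ ω₂ ω₃ ω₄ s

lemma continuous_phi : Continuous (phi ℓ₁ ℓ₂ ℓ₃ ℓ₄ ω₂ ω₃ ω₄) := by
  unfold phi
  have h : ∀ a L : ℝ, Continuous (fun t : ℝ => clamp L (t - a)) := fun a L =>
    (continuous_clamp L).comp (continuous_id.sub continuous_const)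
  exact ((continuous_const.mul (h ℓ₁ ℓ₂)).add (continuous_const.mul (h (ℓ₁+ℓ₂) ℓ₃))).add
    (continuous_const.mul (h (ℓ₁+ℓ₂+ℓ₃) ℓ₄))

lemma continuous_bdir : Continuous (bdir X W ℓ₁ ℓ₂ ℓ₃ ℓ₄ ω₂ ω₃ ω₄) :=
  continuous_uvec_comp (continuous_phi ℓ₁ ℓ₂ ℓ₃ ℓ₄ ω₂ ω₃ ω₄)

variable {ℓ₁ ℓ₂ ℓ₃ ℓ₄ ℓ₅}

lemma phi_eq1 (h2 : 0 ≤ ℓ₂) (h3 : 0 ≤ ℓ₃) (h4 : 0 ≤ ℓ₄) :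
    ∀ t ∈ Icc 0 ℓ₁, phi ℓ₁ ℓ₂ ℓ₃ ℓ₄ ω₂ ω₃ ω₄ t = 0 + 0 * t := by
  intro t ht
  obtain ⟨ht0, ht1⟩ := ht
  unfold phi
  rw [clamp_nonpos h2 (by linarith), clamp_nonpos h3 (by linarith),
    clamp_nonpos h4 (by linarith)]
  ring

lemma phi_eq2 (h3 : 0 ≤ ℓ₃) (h4 : 0 ≤ ℓ₄) :
    ∀ t ∈ Icc ℓ₁ (ℓ₁ + ℓ₂), phi ℓ₁ ℓ₂ ℓ₃ ℓ₄ ω₂ ω₃ ω₄ t = -(ω₂ * ℓ₁) + ω₂ * t := by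
  intro t ht
  obtain ⟨ht0, ht1⟩ := ht
  unfold phi
  rw [clamp_mem (by linarith) (by linarith), clamp_nonpos h3 (by linarith),
    clamp_nonpos h4 (by linarith)]
  ring

lemma phi_eq3 (h2 : 0 ≤ ℓ₂) (h4 : 0 ≤ ℓ₄) :
    ∀ t ∈ Icc (ℓ₁ + ℓ₂) (ℓ₁ + ℓ₂ + ℓ₃), phi ℓ₁ ℓ₂ ℓ₃ ℓ₄ ω₂ ω₃ ω₄ t =
      (ω₂ * ℓ₂ - ω₃ * (ℓ₁ + ℓ₂)) + ω₃ * t := by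
  intro t ht
  obtain ⟨ht0, ht1⟩ := ht
  unfold phi
  rw [clamp_ge h2 (by linarith), clamp_mem (by linarith) (by linarith),
    clamp_nonpos h4 (by linarith)]
  ring

lemma phi_eq4 (h2 : 0 ≤ ℓ₂) (h3 : 0 ≤ ℓ₃) :
    ∀ t ∈ Icc (ℓ₁ + ℓ₂ + ℓ₃) (ℓ₁ + ℓ₂ + ℓ₃ + ℓ₄), phi ℓ₁ ℓ₂ ℓ₃ ℓ₄ ω₂ ω₃ ω₄ t =
      (ω₂ * ℓ₂ + ω₃ * ℓ₃ - ω₄ * (ℓ₁ + ℓ₂ + ℓ₃)) + ω₄ * t := by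
  intro t ht
  obtain ⟨ht0, ht1⟩ := ht
  unfold phi
  rw [clamp_ge h2 (by linarith), clamp_ge h3 (by linarith),
    clamp_mem (by linarith) (by linarith)]
  ring

lemma phi_eq5 (h2 : 0 ≤ ℓ₂) (h3 : 0 ≤ ℓ₃) (h4 : 0 ≤ ℓ₄) :
    ∀ t ∈ Icc (ℓ₁ + ℓ₂ + ℓ₃ + ℓ₄) (ℓ₁ + ℓ₂ + ℓ₃ + ℓ₄ + ℓ₅), phi ℓ₁ ℓ₂ ℓ₃ ℓ₄ ω₂ ω₃ ω₄ t =
      (ω₂ * ℓ₂ + ω₃ * ℓ₃ + ω₄ * ℓ₄) + 0 * t := by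
  intro t ht
  obtain ⟨ht0, ht1⟩ := ht
  unfold phi
  rw [clamp_ge h2 (by linarith), clamp_ge h3 (by linarith), clamp_ge h4 (by linarith)]
  ring

variable {x X W ω₂ ω₃ ω₄}

lemma bdir_deriv_piece {p q c ω : ℝ}
    (heq : ∀ t ∈ Icc p q, phi ℓ₁ ℓ₂ ℓ₃ ℓ₄ ω₂ ω₃ ω₄ t = c + ω * t) {t : ℝ} (ht : t ∈ Icc p q) :
    HasDerivWithinAt (bdir X W ℓ₁ ℓ₂ ℓ₃ ℓ₄ ω₂ ω₃ ω₄) (ω • vvec X W (c + ω * t)) (Icc p q) t :=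
  ((hasDerivAt_uvec X W c ω t).hasDerivWithinAt).congr
    (fun s hs => by rw [bdir, heq s hs]) (by rw [bdir, heq t ht])

lemma piece_acc (hX : ‖X‖ = 1) (hW : ‖W‖ = 1) (hXW : (inner ℝ X W : ℝ) = 0)
    {p q c ω : ℝ} (hω : |ω| ≤ 1)
    (heq : ∀ t ∈ Icc p q, phi ℓ₁ ℓ₂ ℓ₃ ℓ₄ ω₂ ω₃ ω₄ t = c + ω * t) :
    ∃ acc : ℝ → Plane, ContinuousOn acc (Icc p q) ∧
      ∀ t ∈ Icc p q, HasDerivWithinAt (bdir X W ℓ₁ ℓ₂ ℓ₃ ℓ₄ ω₂ ω₃ ω₄) (acc t) (Icc p q) t ∧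
        ‖acc t‖ ≤ 1 := by
  refine ⟨fun t => ω • vvec X W (c + ω * t), ?_, fun t ht => ⟨bdir_deriv_piece heq ht, ?_⟩⟩
  · apply Continuous.continuousOn
    unfold vvec
    fun_prop
  · rw [norm_smul, norm_vvec hX hW hXW, mul_one]
    exact hω

def useq (ℓ₁ ℓ₂ ℓ₃ ℓ₄ ℓ₅ : ℝ) : ℕ → ℝ
  | 0 => 0
  | 1 => ℓ₁
  | 2 => ℓ₁ + ℓ₂
  | 3 => ℓ₁ + ℓ₂ + ℓ₃
  | 4 => ℓ₁ + ℓ₂ + ℓ₃ + ℓ₄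
  | _ => ℓ₁ + ℓ₂ + ℓ₃ + ℓ₄ + ℓ₅

def mkPath (x X W : Plane) (ℓ₁ ℓ₂ ℓ₃ ℓ₄ ℓ₅ ω₂ ω₃ ω₄ : ℝ)
    (hX : ‖X‖ = 1) (hW : ‖W‖ = 1) (hXW : (inner ℝ X W : ℝ) = 0)
    (h1 : 0 ≤ ℓ₁) (h2 : 0 ≤ ℓ₂) (h3 : 0 ≤ ℓ₃) (h4 : 0 ≤ ℓ₄) (h5 : 0 ≤ ℓ₅)
    (hω₂ : |ω₂| ≤ 1) (hω₃ : |ω₃| ≤ 1) (hω₄ : |ω₄| ≤ 1) : BCPath where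
  len := ℓ₁ + ℓ₂ + ℓ₃ + ℓ₄ + ℓ₅
  len_nonneg := by linarith
  toFun := bpos x X W ℓ₁ ℓ₂ ℓ₃ ℓ₄ ω₂ ω₃ ω₄
  dir := bdir X W ℓ₁ ℓ₂ ℓ₃ ℓ₄ ω₂ ω₃ ω₄
  hasDeriv := by
    intro t _
    apply HasDerivAt.hasDerivWithinAt
    unfold bpos
    have hc := continuous_bdir X W ℓ₁ ℓ₂ ℓ₃ ℓ₄ ω₂ ω₃ ω₄
    have h := intervalIntegral.integral_hasDerivAt_right
      (hc.intervalIntegrable 0 t)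
      (hc.stronglyMeasurableAtFilter MeasureTheory.volume (nhds t))
      hc.continuousAt
    exact h.const_add x
  contDir := (continuous_bdir X W ℓ₁ ℓ₂ ℓ₃ ℓ₄ ω₂ ω₃ ω₄).continuousOn
  unitSpeed := fun t _ => norm_uvec hX hW hXW _
  piecewiseC2 := by
    refine ⟨5, useq ℓ₁ ℓ₂ ℓ₃ ℓ₄ ℓ₅, rfl, rfl, ?_, ?_⟩
    · intro i hi
      interval_cases i <;> simp [useq] <;> linarith
    · intro i hi
      interval_cases i
      · exact piece_acc hX hW hXW (by simpa using zero_le_one) (phi_eq1 ω₂ ω₃ ω₄ h2 h3 h4)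
      · exact piece_acc hX hW hXW hω₂ (phi_eq2 ω₂ ω₃ ω₄ h3 h4)
      · exact piece_acc hX hW hXW hω₃ (phi_eq3 ω₂ ω₃ ω₄ h2 h4)
      · exact piece_acc hX hW hXW hω₄ (phi_eq4 ω₂ ω₃ ω₄ h2 h3)
      · exact piece_acc hX hW hXW (by simpa using zero_le_one) (phi_eq5 ω₂ ω₃ ω₄ h2 h3 h4)

end template

end SCSAux

namespace SCSAux
open Real

section endpoints

variable {x X W : Plane} {ℓ₁ ℓ₂ ℓ₃ ℓ₄ ℓ₅ ω₂ ω₃ ω₄ : ℝ}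

lemma bpos_zero : bpos x X W ℓ₁ ℓ₂ ℓ₃ ℓ₄ ω₂ ω₃ ω₄ 0 = x := by
  simp [bpos]

lemma bdir_zero (h1 : 0 ≤ ℓ₁) (h2 : 0 ≤ ℓ₂) (h3 : 0 ≤ ℓ₃) (h4 : 0 ≤ ℓ₄) :
    bdir X W ℓ₁ ℓ₂ ℓ₃ ℓ₄ ω₂ ω₃ ω₄ 0 = X := by
  rw [bdir, phi_eq1 ω₂ ω₃ ω₄ h2 h3 h4 0 ⟨le_refl 0, h1⟩]
  simpa using uvec_zero X W

lemma bdir_len (h2 : 0 ≤ ℓ₂) (h3 : 0 ≤ ℓ₃) (h4 : 0 ≤ ℓ₄) (h5 : 0 ≤ ℓ₅) :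
    bdir X W ℓ₁ ℓ₂ ℓ₃ ℓ₄ ω₂ ω₃ ω₄ (ℓ₁ + ℓ₂ + ℓ₃ + ℓ₄ + ℓ₅) =
      uvec X W (ω₂ * ℓ₂ + ω₃ * ℓ₃ + ω₄ * ℓ₄) := by
  rw [bdir, phi_eq5 ω₂ ω₃ ω₄ h2 h3 h4 _ ⟨by linarith, le_refl _⟩]
  norm_num

lemma bpos_len (h1 : 0 ≤ ℓ₁) (h2 : 0 ≤ ℓ₂) (h3 : 0 ≤ ℓ₃) (h4 : 0 ≤ ℓ₄) (h5 : 0 ≤ ℓ₅)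
    (hω₂ : ω₂ ≠ 0) (hω₃ : ω₃ ≠ 0) (hω₄ : ω₄ ≠ 0) :
    bpos x X W ℓ₁ ℓ₂ ℓ₃ ℓ₄ ω₂ ω₃ ω₄ (ℓ₁ + ℓ₂ + ℓ₃ + ℓ₄ + ℓ₅) =
      x + ℓ₁ • X
        + ω₂⁻¹ • ((sin (ω₂ * ℓ₂)) • X + (1 - cos (ω₂ * ℓ₂)) • W)
        + ω₃⁻¹ • ((sin (ω₂ * ℓ₂ + ω₃ * ℓ₃) - sin (ω₂ * ℓ₂)) • X +
            (cos (ω₂ * ℓ₂) - cos (ω₂ * ℓ₂ + ω₃ * ℓ₃)) • W)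
        + ω₄⁻¹ • ((sin (ω₂ * ℓ₂ + ω₃ * ℓ₃ + ω₄ * ℓ₄) - sin (ω₂ * ℓ₂ + ω₃ * ℓ₃)) • X +
            (cos (ω₂ * ℓ₂ + ω₃ * ℓ₃) - cos (ω₂ * ℓ₂ + ω₃ * ℓ₃ + ω₄ * ℓ₄)) • W)
        + ℓ₅ • uvec X W (ω₂ * ℓ₂ + ω₃ * ℓ₃ + ω₄ * ℓ₄) := by
  have hc := continuous_bdir X W ℓ₁ ℓ₂ ℓ₃ ℓ₄ ω₂ ω₃ ω₄
  have hint : ∀ p q : ℝ, IntervalIntegrable (bdir X W ℓ₁ ℓ₂ ℓ₃ ℓ₄ ω₂ ω₃ ω₄)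
      MeasureTheory.volume p q := fun p q => hc.intervalIntegrable p q
  have split : ∫ s in (0:ℝ)..(ℓ₁ + ℓ₂ + ℓ₃ + ℓ₄ + ℓ₅), bdir X W ℓ₁ ℓ₂ ℓ₃ ℓ₄ ω₂ ω₃ ω₄ s =
      (∫ s in (0:ℝ)..ℓ₁, bdir X W ℓ₁ ℓ₂ ℓ₃ ℓ₄ ω₂ ω₃ ω₄ s)
      + (∫ s in ℓ₁..(ℓ₁ + ℓ₂), bdir X W ℓ₁ ℓ₂ ℓ₃ ℓ₄ ω₂ ω₃ ω₄ s)
      + (∫ s in (ℓ₁ + ℓ₂)..(ℓ₁ + ℓ₂ + ℓ₃), bdir X W ℓ₁ ℓ₂ ℓ₃ ℓ₄ ω₂ ω₃ ω₄ s)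
      + (∫ s in (ℓ₁ + ℓ₂ + ℓ₃)..(ℓ₁ + ℓ₂ + ℓ₃ + ℓ₄), bdir X W ℓ₁ ℓ₂ ℓ₃ ℓ₄ ω₂ ω₃ ω₄ s)
      + (∫ s in (ℓ₁ + ℓ₂ + ℓ₃ + ℓ₄)..(ℓ₁ + ℓ₂ + ℓ₃ + ℓ₄ + ℓ₅),
          bdir X W ℓ₁ ℓ₂ ℓ₃ ℓ₄ ω₂ ω₃ ω₄ s) := by
    rw [intervalIntegral.integral_add_adjacent_intervals (hint _ _) (hint _ _),
      intervalIntegral.integral_add_adjacent_intervals (hint _ _) (hint _ _),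
      intervalIntegral.integral_add_adjacent_intervals (hint _ _) (hint _ _),
      intervalIntegral.integral_add_adjacent_intervals (hint _ _) (hint _ _)]
  have e1 : (∫ s in (0:ℝ)..ℓ₁, bdir X W ℓ₁ ℓ₂ ℓ₃ ℓ₄ ω₂ ω₃ ω₄ s) = ℓ₁ • X := by
    rw [intervalIntegral.integral_congr (g := fun t => uvec X W (0 + 0 * t))
      (fun s hs => by rw [bdir, phi_eq1 ω₂ ω₃ ω₄ h2 h3 h4 s (by rwa [uIcc_of_le h1] at hs)])]
    simp [intervalIntegral.integral_const, uvec_zero]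
  have e2 : (∫ s in ℓ₁..(ℓ₁ + ℓ₂), bdir X W ℓ₁ ℓ₂ ℓ₃ ℓ₄ ω₂ ω₃ ω₄ s) =
      ω₂⁻¹ • ((sin (ω₂ * ℓ₂)) • X + (1 - cos (ω₂ * ℓ₂)) • W) := by
    rw [intervalIntegral.integral_congr (g := fun t => uvec X W (-(ω₂ * ℓ₁) + ω₂ * t))
      (fun s hs => by rw [bdir, phi_eq2 ω₂ ω₃ ω₄ h3 h4 s
        (by rwa [uIcc_of_le (by linarith : ℓ₁ ≤ ℓ₁ + ℓ₂)] at hs)]),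
      integral_uvec X W _ _ hω₂]
    rw [show -(ω₂ * ℓ₁) + ω₂ * (ℓ₁ + ℓ₂) = ω₂ * ℓ₂ by ring,
      show -(ω₂ * ℓ₁) + ω₂ * ℓ₁ = 0 by ring]
    norm_num
  have e3 : (∫ s in (ℓ₁ + ℓ₂)..(ℓ₁ + ℓ₂ + ℓ₃), bdir X W ℓ₁ ℓ₂ ℓ₃ ℓ₄ ω₂ ω₃ ω₄ s) =
      ω₃⁻¹ • ((sin (ω₂ * ℓ₂ + ω₃ * ℓ₃) - sin (ω₂ * ℓ₂)) • X +
        (cos (ω₂ * ℓ₂) - cos (ω₂ * ℓ₂ + ω₃ * ℓ₃)) • W) := by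
    rw [intervalIntegral.integral_congr
      (g := fun t => uvec X W ((ω₂ * ℓ₂ - ω₃ * (ℓ₁ + ℓ₂)) + ω₃ * t))
      (fun s hs => by rw [bdir, phi_eq3 ω₂ ω₃ ω₄ h2 h4 s
        (by rwa [uIcc_of_le (by linarith : ℓ₁ + ℓ₂ ≤ ℓ₁ + ℓ₂ + ℓ₃)] at hs)]),
      integral_uvec X W _ _ hω₃]
    congr 3 <;> ring_nf
  have e4 : (∫ s in (ℓ₁ + ℓ₂ + ℓ₃)..(ℓ₁ + ℓ₂ + ℓ₃ + ℓ₄), bdir X W ℓ₁ ℓ₂ ℓ₃ ℓ₄ ω₂ ω₃ ω₄ s) =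
      ω₄⁻¹ • ((sin (ω₂ * ℓ₂ + ω₃ * ℓ₃ + ω₄ * ℓ₄) - sin (ω₂ * ℓ₂ + ω₃ * ℓ₃)) • X +
        (cos (ω₂ * ℓ₂ + ω₃ * ℓ₃) - cos (ω₂ * ℓ₂ + ω₃ * ℓ₃ + ω₄ * ℓ₄)) • W) := by
    rw [intervalIntegral.integral_congr
      (g := fun t => uvec X W ((ω₂ * ℓ₂ + ω₃ * ℓ₃ - ω₄ * (ℓ₁ + ℓ₂ + ℓ₃)) + ω₄ * t))
      (fun s hs => by rw [bdir, phi_eq4 ω₂ ω₃ ω₄ h2 h3 s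
        (by rwa [uIcc_of_le (by linarith : ℓ₁ + ℓ₂ + ℓ₃ ≤ ℓ₁ + ℓ₂ + ℓ₃ + ℓ₄)] at hs)]),
      integral_uvec X W _ _ hω₄]
    congr 3 <;> ring_nf
  have e5 : (∫ s in (ℓ₁ + ℓ₂ + ℓ₃ + ℓ₄)..(ℓ₁ + ℓ₂ + ℓ₃ + ℓ₄ + ℓ₅),
      bdir X W ℓ₁ ℓ₂ ℓ₃ ℓ₄ ω₂ ω₃ ω₄ s) = ℓ₅ • uvec X W (ω₂ * ℓ₂ + ω₃ * ℓ₃ + ω₄ * ℓ₄) := by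
    rw [intervalIntegral.integral_congr
      (g := fun t => uvec X W ((ω₂ * ℓ₂ + ω₃ * ℓ₃ + ω₄ * ℓ₄) + 0 * t))
      (fun s hs => by rw [bdir, phi_eq5 ω₂ ω₃ ω₄ h2 h3 h4 s
        (by rwa [uIcc_of_le (by linarith : ℓ₁ + ℓ₂ + ℓ₃ + ℓ₄ ≤ ℓ₁ + ℓ₂ + ℓ₃ + ℓ₄ + ℓ₅)] at hs)])]
    simp only [zero_mul, add_zero]
    rw [integral_uvec_const]
    congr 1
    ring
  rw [bpos, split, e1, e2, e3, e4, e5]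
  abel

end endpoints
end SCSAux

namespace SCSAux
open Real

section gamma
variable {p : BCPath} {a b : ℝ}

lemma within_Ici {f : ℝ → Plane} {d : Plane} {t : ℝ}
    (h : HasDerivWithinAt f d (Icc a b) t) (ht : t ∈ Ico a b) :
    HasDerivWithinAt f d (Ici t) t :=
  h.mono_of_mem_nhdsWithin (Icc_mem_nhdsGE_of_mem ht)

lemma seg_dir_const (hsub : Icc a b ⊆ Icc 0 p.len) (hseg : SegmentOn p a b) :
    ∀ t ∈ Icc a b, p.dir t = p.dir a :=
  constant_of_has_deriv_right_zero (p.contDir.mono hsub)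
    (fun t ht => within_Ici (hseg t (Ico_subset_Icc_self ht)) ht)

lemma cont_toFun (hsub : Icc a b ⊆ Icc 0 p.len) : ContinuousOn p.toFun (Icc a b) :=
  fun t ht => ((p.hasDeriv t (hsub ht)).continuousWithinAt).mono hsub

lemma seg_pos (hab : a ≤ b) (hsub : Icc a b ⊆ Icc 0 p.len) (hseg : SegmentOn p a b) :
    p.toFun b = p.toFun a + (b - a) • p.dir a := by
  have hconst := seg_dir_const hsub hseg
  have key : ∀ t ∈ Icc a b, p.toFun t - t • p.dir a = p.toFun a - a • p.dir a := by
    apply constant_of_has_deriv_right_zero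
    · exact (cont_toFun hsub).sub ((continuous_id.smul continuous_const).continuousOn)
    · intro t ht
      have h1 : HasDerivWithinAt p.toFun (p.dir t) (Ici t) t :=
        within_Ici ((p.hasDeriv t (hsub (Ico_subset_Icc_self ht))).mono hsub) ht
      have h2 : HasDerivAt (fun s : ℝ => s • p.dir a) ((1:ℝ) • p.dir a) t :=
        (hasDerivAt_id t).smul_const (p.dir a)
      have h3 := h1.sub h2.hasDerivWithinAt
      rw [hconst t (Ico_subset_Icc_self ht), one_smul, sub_self] at h3
      exact h3
  have h := key b ⟨hab, le_refl b⟩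
  have : p.toFun b = p.toFun a - a • p.dir a + b • p.dir a := by
    rw [← h]; abel
  rw [this, sub_smul]; abel

lemma kJ_vvec {κ : ℝ} (hκ : κ = 1 ∨ κ = -1) (X : Plane) (α : ℝ) :
    κ • J (uvec X (κ • J X) α) = vvec X (κ • J X) α := by
  have hκ2 : κ * κ = 1 := by rcases hκ with h | h <;> rw [h] <;> norm_num
  unfold uvec vvec
  rw [J_add, J_smul, J_smul, J_smul, J_J, smul_add]
  rw [smul_smul κ (sin α), mul_comm κ (sin α), ← smul_smul (sin α) κ,
    smul_smul κ κ, hκ2, one_smul]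
  rw [smul_smul κ (cos α), mul_comm κ (cos α), ← smul_smul (cos α) κ]
  module

lemma arc_dir {κ : ℝ} (hab : a ≤ b) (hsub : Icc a b ⊆ Icc 0 p.len)
    (hκ : κ = 1 ∨ κ = -1) (harc : ArcOn p κ a b) :
    ∀ t ∈ Icc a b, p.dir t = uvec (p.dir a) (κ • J (p.dir a)) (t - a) := by
  set X' := p.dir a with hX'
  set W' := κ • J X' with hW'
  have hlip : ∀ s : ℝ, LipschitzWith 1 (fun z : Plane => κ • J z) := by
    intro s
    apply LipschitzWith.of_dist_le_mul
    intro z w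
    rw [dist_eq_norm, dist_eq_norm, ← smul_sub, ← J_sub, norm_smul, norm_J]
    rcases hκ with h | h <;> rw [h] <;> simp
  have hg : ∀ t : ℝ, HasDerivAt (fun s => uvec X' W' (s - a))
      (κ • J (uvec X' W' (t - a))) t := by
    intro t
    have h := hasDerivAt_uvec X' W' (-a) 1 t
    simp only [one_mul, one_smul] at h
    have heq : (fun s => uvec X' W' (-a + s)) = (fun s => uvec X' W' (s - a)) := by
      funext s; rw [neg_add_eq_sub]
    rw [heq, neg_add_eq_sub] at h
    rw [kJ_vvec hκ]
    exact h
  have huniq := ODE_solution_unique (v := fun _ z => κ • J z) hlip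
    (f := p.dir) (g := fun s => uvec X' W' (s - a)) (a := a) (b := b)
    (p.contDir.mono hsub)
    (fun t ht => within_Ici (harc t (Ico_subset_Icc_self ht)) ht)
    (Continuous.continuousOn (by
      exact continuous_uvec_comp (continuous_id.sub continuous_const)))
    (fun t ht => (hg t).hasDerivWithinAt)
    (by simp [uvec_zero, hX'])
  exact huniq

lemma hasDerivAt_arcpos (X W : Plane) (a t : ℝ) :
    HasDerivAt (fun s => sin (s - a) • X + (1 - cos (s - a)) • W) (uvec X W (t - a)) t := by
  have h1 : HasDerivAt (fun s : ℝ => s - a) 1 t := (hasDerivAt_id t).sub_const a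
  have hs : HasDerivAt (fun s : ℝ => sin (s - a)) (cos (t - a) * 1) t :=
    (Real.hasDerivAt_sin (t - a)).comp (h₂ := Real.sin) t h1
  have hc : HasDerivAt (fun s : ℝ => 1 - cos (s - a)) (0 - (-sin (t - a) * 1)) t :=
    (hasDerivAt_const t 1).sub ((Real.hasDerivAt_cos (t - a)).comp (h₂ := Real.cos) t h1)
  have := (hs.smul_const X).add (hc.smul_const W)
  refine this.congr_deriv ?_
  unfold uvec
  norm_num

lemma arc_pos {κ : ℝ} (hab : a ≤ b) (hsub : Icc a b ⊆ Icc 0 p.len)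
    (hκ : κ = 1 ∨ κ = -1) (harc : ArcOn p κ a b) :
    p.toFun b = p.toFun a + sin (b - a) • p.dir a +
      (1 - cos (b - a)) • (κ • J (p.dir a)) := by
  set X' := p.dir a
  set W' := κ • J X'
  have hdir := arc_dir hab hsub hκ harc
  have key : ∀ t ∈ Icc a b,
      p.toFun t - (sin (t - a) • X' + (1 - cos (t - a)) • W') =
      p.toFun a - (sin (a - a) • X' + (1 - cos (a - a)) • W') := by
    apply constant_of_has_deriv_right_zero
    · refine (cont_toFun hsub).sub (Continuous.continuousOn ?_)
      exact ((Real.continuous_sin.comp (continuous_id.sub continuous_const)).smul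
        continuous_const).add
        (((continuous_const.sub (Real.continuous_cos.comp
          (continuous_id.sub continuous_const)))).smul continuous_const)
    · intro t ht
      have h1 : HasDerivWithinAt p.toFun (p.dir t) (Ici t) t :=
        within_Ici ((p.hasDeriv t (hsub (Ico_subset_Icc_self ht))).mono hsub) ht
      have h3 := h1.sub (hasDerivAt_arcpos X' W' a t).hasDerivWithinAt
      rw [hdir t (Ico_subset_Icc_self ht), sub_self] at h3
      exact h3
  have h := key b ⟨hab, le_refl b⟩
  simp only [sub_self, Real.sin_zero, Real.cos_zero, sub_self, zero_smul, sub_zero,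
    add_zero, zero_add] at h
  have : p.toFun b = p.toFun a + (sin (b - a) • X' + (1 - cos (b - a)) • W') := by
    rw [← h]; abel
  rw [this]; abel

end gamma
end SCSAux

set_option maxHeartbeats 3000000 in
open SCSAux Real in
/-- SCS paths (segment, unit-circle arc, segment, all of positive length)
are not length minimisers. -/
theorem scs_not_minimiser (x y X Y : Plane) (hX : ‖X‖ = 1) (hY : ‖Y‖ = 1)
    (γ : BCPath) (hγ : InGamma γ x X y Y)
    (t₁ t₂ ε : ℝ)
    (h01 : 0 < t₁) (h12 : t₁ < t₂) (h23 : t₂ < γ.len)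
    (hε : ε = 1 ∨ ε = -1)
    (hs1 : SegmentOn γ 0 t₁) (hc : ArcOn γ ε t₁ t₂) (hs2 : SegmentOn γ t₂ γ.len) :
    ∃ β : BCPath, InGamma β x X y Y ∧ β.len < γ.len := by
  have hπ := Real.pi_pos
  obtain ⟨hx0, hX0, hy0, hY0⟩ := hγ
  set W : Plane := ε • J X with hWdef
  set θ : ℝ := t₂ - t₁ with hθdef
  set b : ℝ := γ.len - t₂ with hbdef
  have hθpos : 0 < θ := by rw [hθdef]; linarith
  have hbpos : 0 < b := by rw [hbdef]; linarith
  have hlen : γ.len = t₁ + θ + b := by rw [hθdef, hbdef]; ring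
  have hsub1 : Icc (0:ℝ) t₁ ⊆ Icc 0 γ.len := Icc_subset_Icc le_rfl (by linarith)
  have hsub2 : Icc t₁ t₂ ⊆ Icc 0 γ.len := Icc_subset_Icc (by linarith) (by linarith)
  have hsub3 : Icc t₂ γ.len ⊆ Icc 0 γ.len := Icc_subset_Icc (by linarith) le_rfl
  have hWn : ‖W‖ = 1 := by
    rw [hWdef, norm_smul, norm_J, hX]
    rcases hε with h | h <;> rw [h] <;> norm_num
  have hXW : (inner ℝ X W : ℝ) = 0 := by
    rw [hWdef, real_inner_smul_right, inner_J, mul_zero]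
  have hd1 : γ.dir t₁ = X := by
    rw [seg_dir_const hsub1 hs1 t₁ ⟨by linarith, le_rfl⟩, hX0]
  have hdt : ∀ t ∈ Icc t₁ t₂, γ.dir t = uvec X W (t - t₁) := by
    intro t ht
    rw [arc_dir (le_of_lt h12) hsub2 hε hc t ht, hd1]
  have hd2 : γ.dir t₂ = uvec X W θ := hdt t₂ ⟨le_of_lt h12, le_rfl⟩
  have hYu : Y = uvec X W θ := by
    rw [← hY0, seg_dir_const hsub3 hs2 γ.len ⟨by linarith, le_rfl⟩, hd2]
  have hp1 : γ.toFun t₁ = x + t₁ • X := by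
    have h := seg_pos (le_of_lt h01) hsub1 hs1
    rw [hx0, hX0, sub_zero] at h
    exact h
  have hp2 : γ.toFun t₂ = γ.toFun t₁ + sin θ • X + (1 - cos θ) • W := by
    have h := arc_pos (le_of_lt h12) hsub2 hε hc
    rw [hd1] at h
    exact h
  have hp3 : y = γ.toFun t₂ + b • Y := by
    have h := seg_pos h23.le hsub3 hs2
    have hdt2 : γ.dir t₂ = Y := by rw [hd2, ← hYu]
    rw [hdt2] at h
    rw [← hy0, h]
  have hy' : y = x + t₁ • X + sin θ • X + (1 - cos θ) • W + b • Y := by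
    rw [hp3, hp2, hp1]
  clear hp1 hp2 hp3 hd1 hd2 hdt hs1 hs2 hc hx0 hX0 hy0 hY0
  clear_value W θ b
  rcases le_or_gt (2 * π) θ with hbig | hless
  · -- Case 1 : θ ≥ 2π : drop a full turn of the circle.
    refine ⟨mkPath x X W t₁ (θ - 2*π) 0 0 b 1 1 1 hX hWn hXW
      (by linarith) (by linarith) le_rfl le_rfl (by linarith)
      (by norm_num) (by norm_num) (by norm_num), ⟨?_, ?_, ?_, ?_⟩, ?_⟩
    · exact bpos_zero
    · exact bdir_zero (by linarith) (by linarith) le_rfl le_rfl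
    · show bpos x X W t₁ (θ - 2*π) 0 0 1 1 1 (t₁ + (θ - 2*π) + 0 + 0 + b) = y
      rw [bpos_len (by linarith) (by linarith) le_rfl le_rfl (by linarith)
        one_ne_zero one_ne_zero one_ne_zero]
      rw [hy', hYu]
      simp only [inv_one, one_mul, mul_zero, add_zero, one_smul, uvec]
      rw [Real.sin_sub_two_pi, Real.cos_sub_two_pi]
      match_scalars <;> ring
    · show bdir X W t₁ (θ - 2*π) 0 0 1 1 1 (t₁ + (θ - 2*π) + 0 + 0 + b) = Y
      rw [bdir_len (by linarith) le_rfl le_rfl (by linarith), hYu]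
      simp only [mul_zero, one_mul, add_zero]
      unfold uvec
      rw [Real.sin_sub_two_pi, Real.cos_sub_two_pi]
    · show t₁ + (θ - 2*π) + 0 + 0 + b < γ.len
      rw [hlen]; linarith
  rcases lt_trichotomy θ π with hltpi | heqpi | hgtpi
  · -- Case 3 : 0 < θ < π : inflate the radius of the circular arc.
    have hhalf : 0 < θ/2 := by linarith
    have hhalf2 : θ/2 < π/2 := by linarith
    have ht'pos : 0 < tan (θ/2) := Real.tan_pos_of_pos_of_lt_pi_div_two hhalf hhalf2
    set t' : ℝ := tan (θ/2) with ht'def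
    clear_value t'
    have hc2pos : 0 < cos (θ/2) := Real.cos_pos_of_mem_Ioo ⟨by linarith, hhalf2⟩
    have hid1 : t' * (1 + cos θ) = sin θ := by
      rw [ht'def, show θ = 2*(θ/2) by ring]
      rw [Real.tan_eq_sin_div_cos, Real.sin_two_mul, Real.cos_two_mul,
        show 2*(θ/2)/2 = θ/2 by ring]
      field_simp
      ring
    have hid2 : t' * sin θ = 1 - cos θ := by
      rw [ht'def, show θ = 2*(θ/2) by ring]
      rw [Real.tan_eq_sin_div_cos, Real.sin_two_mul, Real.cos_two_mul,
        show 2*(θ/2)/2 = θ/2 by ring]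
      field_simp
      linear_combination (2 : ℝ) * Real.sin_sq_add_cos_sq (θ/2)
    set η : ℝ := min (min t₁ b / (2*t')) 1 with hηdef
    clear_value η
    have hηpos : 0 < η := by
      rw [hηdef]
      apply lt_min _ one_pos
      apply div_pos (lt_min h01 hbpos) (by linarith)
    have hηt' : η * t' ≤ min t₁ b / 2 := by
      have h1 : η ≤ min t₁ b / (2*t') := by rw [hηdef]; exact min_le_left _ _
      have h2 : η * t' ≤ (min t₁ b / (2*t')) * t' :=
        mul_le_mul_of_nonneg_right h1 ht'pos.le
      have h3 : (min t₁ b / (2*t')) * t' = min t₁ b / 2 := by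
        field_simp
      linarith
    have hηta : η * t' ≤ t₁ / 2 := le_trans hηt' (by
      have := min_le_left t₁ b; linarith)
    have hηtb : η * t' ≤ b / 2 := le_trans hηt' (by
      have := min_le_right t₁ b; linarith)
    have h1η : (0:ℝ) < 1 + η := by linarith
    have hα : (1+η)⁻¹ * ((1+η)*θ) = θ := by field_simp
    refine ⟨mkPath x X W (t₁ - η*t') 0 ((1+η)*θ) 0 (b - η*t') 1 (1+η)⁻¹ 1 hX hWn hXW
      (by linarith) le_rfl (by positivity) le_rfl (by linarith)
      (by norm_num)
      (by rw [abs_of_pos (by positivity)]; rw [inv_le_one_iff₀]; right; linarith)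
      (by norm_num), ⟨?_, ?_, ?_, ?_⟩, ?_⟩
    · exact bpos_zero
    · exact bdir_zero (by linarith) le_rfl (by positivity) le_rfl
    · show bpos x X W (t₁ - η*t') 0 ((1+η)*θ) 0 1 (1+η)⁻¹ 1
        ((t₁ - η*t') + 0 + (1+η)*θ + 0 + (b - η*t')) = y
      rw [bpos_len (by linarith) le_rfl (by positivity) le_rfl (by linarith)
        one_ne_zero (by positivity) one_ne_zero]
      simp only [mul_zero, zero_add, add_zero, one_mul, inv_one, inv_inv, one_smul,
        Real.sin_zero, Real.cos_zero, hα]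
      rw [hy', hYu]
      simp only [uvec]
      match_scalars
      all_goals first
        | ring1
        | linear_combination η * hid1
        | linear_combination (-η) * hid1
        | linear_combination η * hid2
        | linear_combination (-η) * hid2
        | linear_combination 2 * η * hid1
        | linear_combination (-2) * η * hid1
        | linear_combination 2 * η * hid2
        | linear_combination (-2) * η * hid2
    · show bdir X W (t₁ - η*t') 0 ((1+η)*θ) 0 1 (1+η)⁻¹ 1
        ((t₁ - η*t') + 0 + (1+η)*θ + 0 + (b - η*t')) = Y
      rw [bdir_len le_rfl (by positivity) le_rfl (by linarith)]
      simp only [mul_zero, zero_add, add_zero, one_mul, hα]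
      exact hYu.symm
    · show (t₁ - η*t') + 0 + (1+η)*θ + 0 + (b - η*t') < γ.len
      rw [hlen]
      have hθt' : θ < 2*t' := by
        have := Real.lt_tan hhalf hhalf2
        rw [← ht'def] at this
        linarith
      nlinarith [hηpos, hθt']
  · -- Case 2 : θ = π : shrink both segments by the same amount.
    have hδpos : 0 < min t₁ b / 2 := by
      apply div_pos (lt_min h01 hbpos) two_pos
    have hδa : min t₁ b / 2 ≤ t₁ / 2 := by
      have := min_le_left t₁ b; linarith
    have hδb : min t₁ b / 2 ≤ b / 2 := by
      have := min_le_right t₁ b; linarith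
    refine ⟨mkPath x X W (t₁ - min t₁ b / 2) π 0 0 (b - min t₁ b / 2) 1 1 1 hX hWn hXW
      (by linarith) (by linarith) le_rfl le_rfl (by linarith)
      (by norm_num) (by norm_num) (by norm_num), ⟨?_, ?_, ?_, ?_⟩, ?_⟩
    · exact bpos_zero
    · exact bdir_zero (by linarith) (by linarith) le_rfl le_rfl
    · show bpos x X W (t₁ - min t₁ b / 2) π 0 0 1 1 1
        ((t₁ - min t₁ b / 2) + π + 0 + 0 + (b - min t₁ b / 2)) = y
      rw [bpos_len (by linarith) (by linarith) le_rfl le_rfl (by linarith)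
        one_ne_zero one_ne_zero one_ne_zero]
      rw [hy', hYu, heqpi]
      simp only [mul_zero, one_mul, add_zero, inv_one, one_smul, uvec,
        Real.sin_pi, Real.cos_pi]
      match_scalars <;> ring
    · show bdir X W (t₁ - min t₁ b / 2) π 0 0 1 1 1
        ((t₁ - min t₁ b / 2) + π + 0 + 0 + (b - min t₁ b / 2)) = Y
      rw [bdir_len (by linarith) le_rfl le_rfl (by linarith), hYu, heqpi]
      norm_num
    · show (t₁ - min t₁ b / 2) + π + 0 + 0 + (b - min t₁ b / 2) < γ.len
      rw [hlen, heqpi]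
      linarith
  · -- Case 4 : π < θ < 2π : replace S C S by R L R near the arc.
    have hu1 : π/2 < θ/2 := by linarith
    have hu2 : θ/2 < π := by linarith
    have hs2pos : 0 < sin (θ/2) := Real.sin_pos_of_pos_of_lt_pi (by linarith) hu2
    have hc2neg : cos (θ/2) < 0 := Real.cos_neg_of_pi_div_two_lt_of_lt hu1 (by linarith)
    set δ : ℝ := min (min t₁ b) (min (sin (θ/2) / (-cos (θ/2))) (2*π - θ)) / 2 with hδdef
    clear_value δ
    have hδpos : 0 < δ := by
      rw [hδdef]
      apply div_pos _ two_pos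
      exact lt_min (lt_min h01 hbpos)
        (lt_min (div_pos hs2pos (by linarith)) (by linarith))
    have hδa : δ ≤ t₁ / 2 := by
      have h1 : min (min t₁ b) (min (sin (θ/2) / (-cos (θ/2))) (2*π - θ)) ≤ t₁ :=
        le_trans (min_le_left _ _) (min_le_left _ _)
      rw [hδdef]; linarith
    have hδb : δ ≤ b / 2 := by
      have h1 : min (min t₁ b) (min (sin (θ/2) / (-cos (θ/2))) (2*π - θ)) ≤ b :=
        le_trans (min_le_left _ _) (min_le_right _ _)
      rw [hδdef]; linarith
    have hδs : δ * (-cos (θ/2)) ≤ sin (θ/2) / 2 := by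
      have h1 : δ ≤ (sin (θ/2) / (-cos (θ/2))) / 2 := by
        have := le_trans (min_le_right (min t₁ b) _)
          (min_le_left (sin (θ/2) / (-cos (θ/2))) (2*π - θ))
        rw [hδdef]; linarith
      have h2 : δ * (-cos (θ/2)) ≤ ((sin (θ/2) / (-cos (θ/2))) / 2) * (-cos (θ/2)) :=
        mul_le_mul_of_nonneg_right h1 (by linarith)
      have hd : (sin (θ/2) / (-cos (θ/2))) * (-cos (θ/2)) = sin (θ/2) :=
        div_mul_cancel₀ _ (show (0:ℝ) < -cos (θ/2) by linarith).ne'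
      linarith [h2, hd]
    have hδθ : δ ≤ (2*π - θ) / 2 := by
      have := le_trans (min_le_right (min t₁ b) _)
        (min_le_right (sin (θ/2) / (-cos (θ/2))) (2*π - θ))
      rw [hδdef]; linarith
    set A : ℝ := sin (θ/2) + (δ/2) * cos (θ/2) with hAdef
    clear_value A
    have hA0 : 0 < A := by rw [hAdef]; nlinarith [hδs, hs2pos]
    have hA1 : A < sin (θ/2) := by rw [hAdef]; nlinarith [hδpos, hc2neg]
    have hAle1 : A ≤ 1 := le_of_lt (lt_of_lt_of_le hA1 (Real.sin_le_one _))
    set ψ : ℝ := π - θ/2 - arcsin A with hψdef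
    clear_value ψ
    have hψsum : θ/2 + ψ = π - arcsin A := by rw [hψdef]; ring
    have hsinψ : sin (θ/2 + ψ) = A := by
      rw [hψsum, Real.sin_pi_sub, Real.sin_arcsin (by linarith) hAle1]
    have harcnn : 0 ≤ arcsin A := Real.arcsin_nonneg.2 hA0.le
    have harc_lt : arcsin A < π - θ/2 := by
      have h1 : arcsin A < arcsin (sin (θ/2)) :=
        Real.strictMonoOn_arcsin ⟨by linarith, hAle1⟩
          ⟨Real.neg_one_le_sin _, Real.sin_le_one _⟩ hA1
      have h2 : arcsin (sin (θ/2)) = π - θ/2 := by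
        rw [← Real.sin_pi_sub, Real.arcsin_sin (by linarith) (by linarith)]
      linarith
    have hψpos : 0 < ψ := by rw [hψdef]; linarith
    have hMVT : sin (θ/2 + δ/2) < A := by
      obtain ⟨ξ, hξ, hslope⟩ := exists_hasDerivAt_eq_slope sin cos
        (show θ/2 < θ/2 + δ/2 by linarith)
        (Real.continuous_sin.continuousOn) (fun z _ => Real.hasDerivAt_sin z)
      have hξmem := hξ
      have hcc : cos ξ < cos (θ/2) := by
        have := Real.strictAntiOn_cos (a := θ/2) (b := ξ)
          ⟨by linarith, by linarith⟩
          ⟨by linarith [hξmem.1], by linarith [hξmem.2, hδθ]⟩ hξmem.1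
        exact this
      rw [eq_div_iff (by linarith : θ/2 + δ/2 - θ/2 ≠ 0)] at hslope
      rw [hAdef]
      nlinarith [hslope, hcc, hδpos]
    have hψlt : ψ < δ/2 := by
      by_contra hcon
      push_neg at hcon
      have hmono : sin (θ/2 + ψ) ≤ sin (θ/2 + δ/2) := by
        rw [← Real.cos_sub_pi_div_two (θ/2 + ψ), ← Real.cos_sub_pi_div_two (θ/2 + δ/2)]
        apply Real.cos_le_cos_of_nonneg_of_le_pi
        · linarith
        · have : θ/2 + ψ ≤ π := by rw [hψdef]; linarith
          linarith
        · linarith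
      rw [hsinψ] at hmono
      linarith
    have hE1 : 2*sin ψ + 2*sin (θ+ψ) - 2*sin θ = δ * (1 + cos θ) := by
      have e1 : sin ψ = sin (θ/2+ψ) * cos (θ/2) - cos (θ/2+ψ) * sin (θ/2) := by
        rw [← Real.sin_sub]; congr 1; ring
      have e2 : sin (θ+ψ) = sin (θ/2) * cos (θ/2+ψ) + cos (θ/2) * sin (θ/2+ψ) := by
        rw [← Real.sin_add]; congr 1; ring
      have e3 : sin θ = 2 * sin (θ/2) * cos (θ/2) := by
        rw [← Real.sin_two_mul]; congr 1; ring
      have e4 : cos θ = 2 * cos (θ/2)^2 - 1 := by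
        rw [← Real.cos_two_mul]; congr 1; ring
      rw [e1, e2, e3, e4, hsinψ, hAdef]
      ring
    have hE2 : 2*cos ψ - 2*cos (θ+ψ) - 2*(1 - cos θ) = δ * sin θ := by
      have e5 : cos ψ = cos (θ/2+ψ) * cos (θ/2) + sin (θ/2+ψ) * sin (θ/2) := by
        rw [← Real.cos_sub]
        rw [show θ/2 + ψ - θ/2 = ψ by ring]
      have e6 : cos (θ+ψ) = cos (θ/2) * cos (θ/2+ψ) - sin (θ/2) * sin (θ/2+ψ) := by
        rw [← Real.cos_add]; congr 1; ring
      have e3 : sin θ = 2 * sin (θ/2) * cos (θ/2) := by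
        rw [← Real.sin_two_mul]; congr 1; ring
      have e4 : cos θ = 2 * cos (θ/2)^2 - 1 := by
        rw [← Real.cos_two_mul]; congr 1; ring
      rw [e5, e6, e3, e4, hsinψ, hAdef]
      first
      | linear_combination (4 : ℝ) * Real.sin_sq_add_cos_sq (θ/2)
      | linear_combination (-4 : ℝ) * Real.sin_sq_add_cos_sq (θ/2)
      | linear_combination (2 : ℝ) * Real.sin_sq_add_cos_sq (θ/2)
      | linear_combination (-2 : ℝ) * Real.sin_sq_add_cos_sq (θ/2)
    refine ⟨mkPath x X W (t₁ - δ) ψ (θ + 2*ψ) ψ (b - δ) (-1) 1 (-1) hX hWn hXW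
      (by linarith) hψpos.le (by linarith) hψpos.le (by linarith)
      (by norm_num) (by norm_num) (by norm_num), ⟨?_, ?_, ?_, ?_⟩, ?_⟩
    · exact bpos_zero
    · exact bdir_zero (by linarith) hψpos.le (by linarith) hψpos.le
    · show bpos x X W (t₁ - δ) ψ (θ + 2*ψ) ψ (-1) 1 (-1)
        ((t₁ - δ) + ψ + (θ + 2*ψ) + ψ + (b - δ)) = y
      rw [bpos_len (by linarith) hψpos.le (by linarith) hψpos.le (by linarith)
        (by norm_num) one_ne_zero (by norm_num)]
      rw [show (-1:ℝ)*ψ = -ψ by ring, show -ψ + 1*(θ+2*ψ) = θ + ψ by ring,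
        show θ + ψ + -ψ = θ by ring,
        show ((-1:ℝ))⁻¹ = -1 by norm_num, inv_one]
      simp only [Real.sin_neg, Real.cos_neg, one_smul]
      rw [hy', hYu]
      simp only [uvec]
      match_scalars
      all_goals first
        | ring1
        | linear_combination hE1
        | linear_combination -hE1
        | linear_combination hE1/2
        | linear_combination -hE1/2
        | linear_combination hE2
        | linear_combination -hE2
        | linear_combination hE2/2
        | linear_combination -hE2/2
    · show bdir X W (t₁ - δ) ψ (θ + 2*ψ) ψ (-1) 1 (-1)
        ((t₁ - δ) + ψ + (θ + 2*ψ) + ψ + (b - δ)) = Y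
      rw [bdir_len hψpos.le (by linarith) hψpos.le (by linarith)]
      rw [show (-1:ℝ)*ψ + 1*(θ+2*ψ) + -1*ψ = θ by ring]
      exact hYu.symm
    · show (t₁ - δ) + ψ + (θ + 2*ψ) + ψ + (b - δ) < γ.len
      rw [hlen]
      linarith
end
end

section
/- (CCC paths with short middle arc are not length minimisers) Let X and Y be unit vectors in ℝ², x, y ∈ ℝ², and let γ : [0,s] → ℝ² be a path in Γ((x,X),(y,Y)) consisting of three arcs of unit circles with alternating orientations, all of positive length, whose middle arc has length at most π: there exist 0 = t₀ < t₁ < t₂ < t₃ = s and a sign ε ∈ {−1,+1} such that γ'' = ε·J∘γ' on [t₀,t₁], γ'' = −ε·J∘γ' on [t₁,t₂], γ'' = ε·J∘γ' on [t₂,t₃], and t₂ − t₁ ≤ π. Then γ is not a length minimiser: there exists β ∈ Γ((x,X),(y,Y)) with L(β) < L(γ). -/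
open Set

noncomputable section

namespace CCCaux

lemma J_apply0 (v : Plane) : J v 0 = -(v 1) := rfl
lemma J_apply1 (v : Plane) : J v 1 = v 0 := rfl

lemma J_add (u v : Plane) : J (u + v) = J u + J v := by
  ext i; fin_cases i <;> simp [J] <;> ring

lemma J_smul (c : ℝ) (v : Plane) : J (c • v) = c • J v := by
  ext i; fin_cases i <;> simp [J]

lemma J_J (v : Plane) : J (J v) = -v := by
  ext i; fin_cases i <;> simp [J]

lemma J_sub (u v : Plane) : J (u - v) = J u - J v := by
  ext i; fin_cases i <;> simp [J] <;> ring

lemma J_neg (v : Plane) : J (-v) = -J v := by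
  ext i; fin_cases i <;> simp [J]

lemma norm_J (v : Plane) : ‖J v‖ = ‖v‖ := by
  rw [EuclideanSpace.norm_eq, EuclideanSpace.norm_eq]
  congr 1
  rw [Fin.sum_univ_two, Fin.sum_univ_two]
  simp [J]; ring

/-- Rotation by angle θ. -/
def Rot (θ : ℝ) (v : Plane) : Plane := Real.cos θ • v + Real.sin θ • J v

lemma Rot_neg (θ : ℝ) (v : Plane) : Rot θ (-v) = -Rot θ v := by
  simp only [Rot, J_neg, smul_neg, ← neg_add]

lemma Rot_zero (v : Plane) : Rot 0 v = v := by simp [Rot]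

lemma J_Rot (θ : ℝ) (v : Plane) : J (Rot θ v) = Rot θ (J v) := by
  simp [Rot, J_add, J_smul]

lemma Rot_Rot (θ ψ : ℝ) (v : Plane) : Rot θ (Rot ψ v) = Rot (θ + ψ) v := by
  simp only [Rot, J_add, J_smul, J_J, Real.cos_add, Real.sin_add, smul_add, smul_smul,
    smul_neg]
  module

lemma norm_Rot (θ : ℝ) (v : Plane) : ‖Rot θ v‖ = ‖v‖ := by
  rw [EuclideanSpace.norm_eq, EuclideanSpace.norm_eq]
  congr 1
  rw [Fin.sum_univ_two, Fin.sum_univ_two]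
  have h : Real.cos θ ^ 2 + Real.sin θ ^ 2 = 1 := by
    have := Real.sin_sq_add_cos_sq θ; linarith
  simp only [Rot, PiLp.add_apply, PiLp.smul_apply, smul_eq_mul, J_apply0, J_apply1,
    Real.norm_eq_abs, sq_abs]
  nlinarith [h]


/-- J as a continuous linear map. -/
def Jclm : Plane →L[ℝ] Plane :=
  LinearMap.toContinuousLinearMap
    { toFun := J, map_add' := J_add, map_smul' := J_smul }

lemma Jclm_apply (v : Plane) : Jclm v = J v := rfl

lemma hasDerivWithinAt_J {f : ℝ → Plane} {f' : Plane} {s : Set ℝ} {t : ℝ}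
    (h : HasDerivWithinAt f f' s t) :
    HasDerivWithinAt (fun u => J (f u)) (J f') s t := by
  exact (Jclm.hasFDerivAt (x := f t)).comp_hasDerivWithinAt t h

lemma hasDerivWithinAt_linear (c d : ℝ) (s : Set ℝ) (t : ℝ) :
    HasDerivWithinAt (fun u : ℝ => c * u + d) c s t := by
  simpa using (((hasDerivAt_id t).const_mul c).add_const d).hasDerivWithinAt

/-- Derivative of a rotating direction field. -/
lemma hasDerivWithinAt_Rot (c d : ℝ) (v : Plane) (s : Set ℝ) (t : ℝ) :
    HasDerivWithinAt (fun u => Rot (c * u + d) v) (c • J (Rot (c * t + d) v)) s t := by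
  have hlin := hasDerivWithinAt_linear c d s t
  have h1 : HasDerivWithinAt (fun u => Real.cos (c * u + d)) (-Real.sin (c * t + d) * c) s t :=
    hlin.cos
  have h2 : HasDerivWithinAt (fun u => Real.sin (c * u + d)) (Real.cos (c * t + d) * c) s t :=
    hlin.sin
  have := (h1.smul_const v).add (h2.smul_const (J v))
  convert this using 1
  · rfl
  · rfl
  · rfl
  · rfl
  rw [J_Rot]
  simp only [Rot, J_add, J_smul, J_J, smul_add, smul_smul, smul_neg]
  module

/-- Continuity of a rotating direction field. -/
lemma continuous_Rot (c d : ℝ) (v : Plane) :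
    Continuous (fun u => Rot (c * u + d) v) := by
  unfold Rot
  fun_prop

/-- Explicit arc displacement: position of an arc of curvature κ after time u,
starting at the origin with direction w. -/
def arcPos (κ u : ℝ) (w : Plane) : Plane :=
  if κ = 0 then u • w else κ⁻¹ • (J w - J (Rot (κ * u) w))

lemma arcPos_zero (κ : ℝ) (w : Plane) : arcPos κ 0 w = 0 := by
  unfold arcPos
  split
  · simp
  · simp [mul_zero, Rot_zero]

lemma hasDerivWithinAt_arcPos (κ : ℝ) (w : Plane) (s : Set ℝ) (t : ℝ) :
    HasDerivWithinAt (fun u => arcPos κ u w) (Rot (κ * t) w) s t := by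
  rcases eq_or_ne κ 0 with h | h
  · subst h
    have he : (fun u : ℝ => arcPos 0 u w) = fun u : ℝ => u • w := by
      funext u; simp [arcPos]
    rw [he, zero_mul, Rot_zero]
    simpa using (hasDerivWithinAt_id t s).smul_const w
  · have he : (fun u : ℝ => arcPos κ u w) =
        fun u : ℝ => κ⁻¹ • (J w - Rot (κ * u) (J w)) := by
      funext u; simp [arcPos, if_neg h, J_Rot]
    rw [he]
    have hrot := hasDerivWithinAt_Rot κ 0 (J w) s t
    simp only [add_zero] at hrot
    have h2 := ((hasDerivWithinAt_const t s (J w)).sub hrot).const_smul κ⁻¹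
    convert h2 using 1
    · rfl
    · rfl
    · rfl
    · rfl
    rw [J_Rot, J_J, Rot_neg]
    rw [zero_sub]
    simp [smul_neg, neg_neg, smul_smul, inv_mul_cancel₀ h]


/-- Upgrade a derivative within a left subinterval to the full interval,
at a point strictly left of the junction. -/
lemma hdw_left {E : Type*} [NormedAddCommGroup E] [NormedSpace ℝ E]
    {f : ℝ → E} {d : E} {a c b t : ℝ} (h : HasDerivWithinAt f d (Icc a c) t)
    (ht : t < c) : HasDerivWithinAt f d (Icc a b) t := by
  apply h.mono_of_mem_nhdsWithin
  apply mem_nhdsWithin.2 ⟨Iio c, isOpen_Iio, ht, ?_⟩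
  rintro y ⟨hy1, hy2, _⟩
  exact ⟨hy2, le_of_lt hy1⟩

lemma hdw_right {E : Type*} [NormedAddCommGroup E] [NormedSpace ℝ E]
    {f : ℝ → E} {d : E} {a c b t : ℝ} (h : HasDerivWithinAt f d (Icc c b) t)
    (ht : c < t) : HasDerivWithinAt f d (Icc a b) t := by
  apply h.mono_of_mem_nhdsWithin
  apply mem_nhdsWithin.2 ⟨Ioi c, isOpen_Ioi, ht, ?_⟩
  rintro y ⟨hy1, _, hy2⟩
  exact ⟨le_of_lt hy1, hy2⟩

/-- Glue derivatives on two adjacent closed intervals. -/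
lemma glue_deriv {E : Type*} [NormedAddCommGroup E] [NormedSpace ℝ E]
    {f : ℝ → E} {d : ℝ → E} {a c b : ℝ} (hac : a ≤ c) (hcb : c ≤ b)
    (h1 : ∀ t ∈ Icc a c, HasDerivWithinAt f (d t) (Icc a c) t)
    (h2 : ∀ t ∈ Icc c b, HasDerivWithinAt f (d t) (Icc c b) t) :
    ∀ t ∈ Icc a b, HasDerivWithinAt f (d t) (Icc a b) t := by
  intro t ht
  rcases lt_trichotomy t c with h | h | h
  · exact hdw_left (h1 t ⟨ht.1, le_of_lt h⟩) h
  · subst h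
    rw [← Icc_union_Icc_eq_Icc hac hcb]
    exact (h1 t ⟨hac, le_refl t⟩).union (h2 t ⟨le_refl t, hcb⟩)
  · exact hdw_right (h2 t ⟨le_of_lt h, ht.2⟩) h

/-- Glue continuity on two adjacent closed intervals. -/
lemma glue_cont {E : Type*} [TopologicalSpace E]
    {f : ℝ → E} {a c b : ℝ} (hac : a ≤ c) (hcb : c ≤ b)
    (h1 : ContinuousOn f (Icc a c)) (h2 : ContinuousOn f (Icc c b)) :
    ContinuousOn f (Icc a b) := by
  intro t ht
  rcases lt_trichotomy t c with h | h | h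
  · apply (h1 t ⟨ht.1, le_of_lt h⟩).mono_of_mem_nhdsWithin
    apply mem_nhdsWithin.2 ⟨Iio c, isOpen_Iio, h, ?_⟩
    rintro y ⟨hy1, hy2, _⟩
    exact ⟨hy2, le_of_lt hy1⟩
  · subst h
    rw [← Icc_union_Icc_eq_Icc hac hcb]
    exact (h1 t ⟨hac, le_refl t⟩).union (h2 t ⟨le_refl t, hcb⟩)
  · apply (h2 t ⟨le_of_lt h, ht.2⟩).mono_of_mem_nhdsWithin
    apply mem_nhdsWithin.2 ⟨Ioi c, isOpen_Ioi, h, ?_⟩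
    rintro y ⟨hy1, _, hy2⟩
    exact ⟨le_of_lt hy1, hy2⟩

/-- Two functions with the same derivative on an interval and equal at the left
endpoint are equal. -/
lemma eq_of_deriv_eq {E : Type*} [NormedAddCommGroup E] [NormedSpace ℝ E]
    {f g : ℝ → E} {d : ℝ → E} {a b : ℝ} (hab : a ≤ b)
    (hf : ∀ t ∈ Icc a b, HasDerivWithinAt f (d t) (Icc a b) t)
    (hg : ∀ t ∈ Icc a b, HasDerivWithinAt g (d t) (Icc a b) t)
    (h0 : f a = g a) : ∀ t ∈ Icc a b, f t = g t := by
  have key : ∀ t ∈ Icc a b, (f - g) t = (f - g) a := by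
    apply constant_of_has_deriv_right_zero
    · intro t ht
      exact (((hf t ht).sub (hg t ht)).continuousWithinAt : ContinuousWithinAt (f - g) _ t)
    · intro t ht
      have h := (hf t ⟨ht.1, le_of_lt ht.2⟩).sub (hg t ⟨ht.1, le_of_lt ht.2⟩)
      rw [sub_self] at h
      have : HasDerivWithinAt (f - g) 0 (Icc a b) t := h
      apply this.mono_of_mem_nhdsWithin
      apply mem_nhdsWithin.2 ⟨Iio b, isOpen_Iio, ht.2, ?_⟩
      rintro y ⟨hy1, hy2⟩
      exact ⟨le_trans ht.1 hy2, le_of_lt hy1⟩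
  intro t ht
  have h := key t ht
  simp only [Pi.sub_apply] at h
  rw [h0, sub_self] at h
  exact sub_eq_zero.1 h

lemma contJ : Continuous J := Jclm.continuous

/-- Uniqueness for the direction ODE: on an arc of curvature κ the direction
field is an explicit rotation. -/
lemma dir_arc {p : BCPath} {κ a b : ℝ} (hab : a ≤ b)
    (hsub : Icc a b ⊆ Icc 0 p.len) (h : ArcOn p κ a b) :
    ∀ t ∈ Icc a b, p.dir t = Rot (κ * (t - a)) (p.dir a) := by
  set g : ℝ → Plane := fun t =>
    Real.cos (κ * (t - a)) • p.dir t - Real.sin (κ * (t - a)) • J (p.dir t) with hg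
  have hdc : ContinuousOn p.dir (Icc a b) := p.contDir.mono hsub
  have hcont : ContinuousOn g (Icc a b) := by
    apply ContinuousOn.sub
    · exact (Continuous.continuousOn (by fun_prop : Continuous fun t => Real.cos (κ * (t - a)))).smul hdc
    · exact (Continuous.continuousOn (by fun_prop : Continuous fun t => Real.sin (κ * (t - a)))).smul (contJ.comp_continuousOn hdc)
  have hder : ∀ t ∈ Icc a b, HasDerivWithinAt g 0 (Icc a b) t := by
    intro t ht
    have hd := h t ht
    have hdJ := hasDerivWithinAt_J hd
    rw [J_smul, J_J, smul_neg] at hdJ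
    have hlin : HasDerivWithinAt (fun u : ℝ => κ * (u - a)) κ (Icc a b) t := by
      have := hasDerivWithinAt_linear κ (-(κ * a)) (Icc a b) t
      convert this using 2 with u
      ring
    have h1 := (hlin.cos.smul hd)
    have h2 := (hlin.sin.smul hdJ)
    have h3 := h1.sub h2
    convert h3 using 1
    · rfl
    · rfl
    · rfl
    · rfl
    simp only [smul_neg, smul_smul]
    module
  have key : ∀ t ∈ Icc a b, g t = g a := by
    apply constant_of_has_deriv_right_zero hcont
    intro t ht
    apply (hder t ⟨ht.1, le_of_lt ht.2⟩).mono_of_mem_nhdsWithin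
    exact mem_nhdsWithin.2 ⟨Iio b, isOpen_Iio, ht.2,
      fun y hy => ⟨le_trans ht.1 hy.2, le_of_lt hy.1⟩⟩
  intro t ht
  have h1 := key t ht
  have hga : g a = p.dir a := by simp [hg]
  calc p.dir t = Rot (κ * (t - a)) (Rot (-(κ * (t - a))) (p.dir t)) := by
        rw [Rot_Rot, add_neg_cancel, Rot_zero]
    _ = Rot (κ * (t - a)) (g t) := by
        congr 1
        simp [hg, Rot, Real.cos_neg, Real.sin_neg, neg_smul, sub_eq_add_neg]
    _ = Rot (κ * (t - a)) (p.dir a) := by rw [h1, hga]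

/-- Shifted derivative of arcPos. -/
lemma hasDerivWithinAt_arcPos_shift (κ a : ℝ) (w : Plane) (s : Set ℝ) (t : ℝ) :
    HasDerivWithinAt (fun u => arcPos κ (u - a) w) (Rot (κ * (t - a)) w) s t := by
  have hg : HasDerivAt (fun u => arcPos κ u w) (Rot (κ * (t - a)) w) (t - a) := by
    have := hasDerivWithinAt_arcPos κ w univ (t - a)
    rwa [hasDerivWithinAt_univ] at this
  have hh : HasDerivWithinAt (fun u : ℝ => u - a) 1 s t := by
    simpa using (hasDerivWithinAt_id t s).sub_const a
  have := hg.scomp_hasDerivWithinAt t hh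
  simp only [one_smul] at this
  exact this

/-- Explicit formula for positions along an arc. -/
lemma pos_arc {p : BCPath} {κ a b : ℝ} (hab : a ≤ b)
    (hsub : Icc a b ⊆ Icc 0 p.len) (h : ArcOn p κ a b) :
    ∀ t ∈ Icc a b, p.toFun t = p.toFun a + arcPos κ (t - a) (p.dir a) := by
  apply eq_of_deriv_eq hab (d := fun t => Rot (κ * (t - a)) (p.dir a))
  · intro t ht
    rw [← dir_arc hab hsub h t ht]
    exact (p.hasDeriv t (hsub ht)).mono hsub
  · intro t ht
    have h1 := (hasDerivWithinAt_arcPos_shift κ a (p.dir a) (Icc a b) t).const_add (p.toFun a)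
    exact h1
  · rw [sub_self, arcPos_zero, add_zero]


lemma hasDerivWithinAt_Rot_shift (κ a : ℝ) (w : Plane) (s : Set ℝ) (t : ℝ) :
    HasDerivWithinAt (fun u => Rot (κ * (u - a)) w) (κ • J (Rot (κ * (t - a)) w)) s t := by
  have := hasDerivWithinAt_Rot κ (-(κ * a)) w s t
  have he : ∀ u : ℝ, κ * u + -(κ * a) = κ * (u - a) := fun u => by ring
  simpa [he] using this

lemma continuous_Rot_shift (κ a : ℝ) (w : Plane) :
    Continuous (fun u => Rot (κ * (u - a)) w) := by
  unfold Rot; fun_prop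

lemma chain_le {u : ℕ → ℝ} {n : ℕ} (hm : ∀ i < n, u i ≤ u (i + 1)) :
    ∀ j ≤ n, u j ≤ u n := by
  intro j hj
  have key : ∀ k, j + k ≤ n → u j ≤ u (j + k) := by
    intro k
    induction k with
    | zero => intro _; simp
    | succ m ih =>
      intro h
      calc u j ≤ u (j + m) := ih (by omega)
        _ ≤ u (j + m + 1) := hm (j + m) (by omega)
  have := key (n - j) (by omega)
  rwa [show j + (n - j) = n by omega] at this

/-- The trivial path of length zero. -/
def basePath (x X : Plane) (hX : ‖X‖ = 1) : BCPath where
  len := 0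
  len_nonneg := le_refl 0
  toFun := fun _ => x
  dir := fun _ => X
  hasDeriv := by
    intro t ht
    rw [Icc_self] at ht ⊢
    rw [mem_singleton_iff] at ht
    subst ht
    rw [hasDerivWithinAt_iff_hasFDerivWithinAt]
    simp only [HasFDerivWithinAt, nhdsWithin_singleton, hasFDerivAtFilter_iff_isLittleO,
      Asymptotics.isLittleO_pure]
    simp
  contDir := continuousOn_const
  unitSpeed := fun t _ => hX
  piecewiseC2 := ⟨0, fun _ => 0, rfl, rfl, fun i hi => absurd hi (Nat.not_lt_zero i),
    fun i hi => absurd hi (Nat.not_lt_zero i)⟩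

/-- Extension of a path by an arc of curvature κ and length ℓ. -/
def extend (p : BCPath) (κ ℓ : ℝ) (hℓ : 0 ≤ ℓ) (hκ : |κ| ≤ 1) : BCPath where
  len := p.len + ℓ
  len_nonneg := by linarith [p.len_nonneg]
  toFun := fun t => if t ≤ p.len then p.toFun t
    else p.toFun p.len + arcPos κ (t - p.len) (p.dir p.len)
  dir := fun t => if t ≤ p.len then p.dir t
    else Rot (κ * (t - p.len)) (p.dir p.len)
  hasDeriv := by
    have hw : p.dir p.len = Rot (κ * (p.len - p.len)) (p.dir p.len) := by
      rw [sub_self, mul_zero, Rot_zero]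
    apply glue_deriv p.len_nonneg (by linarith : p.len ≤ p.len + ℓ)
    · intro t ht
      have he : ∀ s ∈ Icc (0:ℝ) p.len,
          (if s ≤ p.len then p.toFun s
            else p.toFun p.len + arcPos κ (s - p.len) (p.dir p.len)) = p.toFun s :=
        fun s hs => if_pos hs.2
      rw [if_pos ht.2]
      exact (p.hasDeriv t ht).congr he (he t ht)
    · intro t ht
      have he : ∀ s ∈ Icc p.len (p.len + ℓ),
          (if s ≤ p.len then p.toFun s
            else p.toFun p.len + arcPos κ (s - p.len) (p.dir p.len)) =
          p.toFun p.len + arcPos κ (s - p.len) (p.dir p.len) := by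
        intro s hs
        rcases lt_or_eq_of_le hs.1 with h | h
        · rw [if_neg (not_le.2 h)]
        · rw [← h, if_pos (le_refl _), sub_self, arcPos_zero, add_zero]
      have hd : HasDerivWithinAt
          (fun s => p.toFun p.len + arcPos κ (s - p.len) (p.dir p.len))
          (Rot (κ * (t - p.len)) (p.dir p.len)) (Icc p.len (p.len + ℓ)) t :=
        (hasDerivWithinAt_arcPos_shift κ p.len (p.dir p.len) _ t).const_add _
      have hval : (if t ≤ p.len then p.dir t else Rot (κ * (t - p.len)) (p.dir p.len)) =
          Rot (κ * (t - p.len)) (p.dir p.len) := by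
        rcases lt_or_eq_of_le ht.1 with h | h
        · rw [if_neg (not_le.2 h)]
        · rw [← h, if_pos (le_refl _)]
          exact hw
      beta_reduce
      rw [hval]
      exact (hd.congr he (he t ht))
  contDir := by
    apply glue_cont p.len_nonneg (by linarith : p.len ≤ p.len + ℓ)
    · apply ContinuousOn.congr p.contDir
      intro s hs
      exact if_pos hs.2
    · apply ContinuousOn.congr ((continuous_Rot_shift κ p.len (p.dir p.len)).continuousOn)
      intro s hs
      beta_reduce
      rcases lt_or_eq_of_le hs.1 with h | h
      · exact if_neg (not_le.2 h)
      · rw [← h, if_pos (le_refl _), sub_self, mul_zero, Rot_zero]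
  unitSpeed := by
    intro t ht
    beta_reduce
    by_cases h : t ≤ p.len
    · rw [if_pos h]
      exact p.unitSpeed t ⟨ht.1, h⟩
    · rw [if_neg h, norm_Rot]
      exact p.unitSpeed p.len ⟨p.len_nonneg, le_refl _⟩
  piecewiseC2 := by
    obtain ⟨n, u, hu0, hun, hum, hup⟩ := p.piecewiseC2
    refine ⟨n + 1, fun i => if i ≤ n then u i else p.len + ℓ, by simp [hu0], by simp, ?_, ?_⟩
    · intro i hi
      beta_reduce
      rcases lt_or_eq_of_le (Nat.lt_succ_iff.1 hi) with h | h
      · rw [if_pos (le_of_lt h), if_pos (by omega : i + 1 ≤ n)]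
        exact hum i h
      · subst h
        rw [if_pos (le_refl _), if_neg (by omega), hun]
        linarith
    · intro i hi
      beta_reduce
      rcases lt_or_eq_of_le (Nat.lt_succ_iff.1 hi) with h | h
      · -- an old piece, contained in [0, p.len]
        rw [if_pos (le_of_lt h), if_pos (by omega : i + 1 ≤ n)]
        obtain ⟨acc, hacc, hprop⟩ := hup i h
        refine ⟨acc, hacc, ?_⟩
        intro t ht
        have hle : u (i + 1) ≤ p.len := hun ▸ chain_le hum (i + 1) h
        have he : ∀ s ∈ Icc (u i) (u (i + 1)),
            (if s ≤ p.len then p.dir s else Rot (κ * (s - p.len)) (p.dir p.len)) = p.dir s :=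
          fun s hs => if_pos (le_trans hs.2 hle)
        exact ⟨((hprop t ht).1).congr he (he t ht), (hprop t ht).2⟩
      · -- the new piece
        subst h
        rw [if_pos (le_refl _), if_neg (by omega), hun]
        refine ⟨fun t => κ • J (Rot (κ * (t - p.len)) (p.dir p.len)), ?_, ?_⟩
        · apply Continuous.continuousOn
          have : Continuous (fun t => Rot (κ * (t - p.len)) (J (p.dir p.len))) :=
            continuous_Rot_shift κ p.len (J (p.dir p.len))
          have he : (fun t => κ • J (Rot (κ * (t - p.len)) (p.dir p.len))) =
              fun t => κ • Rot (κ * (t - p.len)) (J (p.dir p.len)) := by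
            funext t; rw [J_Rot]
          rw [he]
          exact this.const_smul κ
        · intro t ht
          constructor
          · have he : ∀ s ∈ Icc p.len (p.len + ℓ),
                (if s ≤ p.len then p.dir s else Rot (κ * (s - p.len)) (p.dir p.len)) =
                Rot (κ * (s - p.len)) (p.dir p.len) := by
              intro s hs
              rcases lt_or_eq_of_le hs.1 with h | h
              · rw [if_neg (not_le.2 h)]
              · rw [← h, if_pos (le_refl _), sub_self, mul_zero, Rot_zero]
            exact (hasDerivWithinAt_Rot_shift κ p.len (p.dir p.len) _ t).congr he (he t ht)
          · rw [norm_smul, norm_J, norm_Rot, p.unitSpeed p.len ⟨p.len_nonneg, le_refl _⟩]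
            simpa using hκ

lemma extend_len (p : BCPath) (κ ℓ : ℝ) (hℓ : 0 ≤ ℓ) (hκ : |κ| ≤ 1) :
    (extend p κ ℓ hℓ hκ).len = p.len + ℓ := rfl

lemma extend_toFun_of_le (p : BCPath) (κ ℓ : ℝ) (hℓ : 0 ≤ ℓ) (hκ : |κ| ≤ 1)
    {t : ℝ} (h : t ≤ p.len) : (extend p κ ℓ hℓ hκ).toFun t = p.toFun t := if_pos h

lemma extend_dir_of_le (p : BCPath) (κ ℓ : ℝ) (hℓ : 0 ≤ ℓ) (hκ : |κ| ≤ 1)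
    {t : ℝ} (h : t ≤ p.len) : (extend p κ ℓ hℓ hκ).dir t = p.dir t := if_pos h

lemma extend_end_pos (p : BCPath) (κ ℓ : ℝ) (hℓ : 0 ≤ ℓ) (hκ : |κ| ≤ 1) :
    (extend p κ ℓ hℓ hκ).toFun (p.len + ℓ) =
      p.toFun p.len + arcPos κ ℓ (p.dir p.len) := by
  show (if p.len + ℓ ≤ p.len then _ else _) = _
  rcases eq_or_lt_of_le hℓ with h | h
  · rw [← h, if_pos (by linarith), add_zero, arcPos_zero, add_zero]
  · rw [if_neg (by simp; linarith), add_sub_cancel_left]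

lemma extend_end_dir (p : BCPath) (κ ℓ : ℝ) (hℓ : 0 ≤ ℓ) (hκ : |κ| ≤ 1) :
    (extend p κ ℓ hℓ hκ).dir (p.len + ℓ) = Rot (κ * ℓ) (p.dir p.len) := by
  show (if p.len + ℓ ≤ p.len then _ else _) = _
  rcases eq_or_lt_of_le hℓ with h | h
  · rw [← h, if_pos (by linarith), add_zero, mul_zero, Rot_zero]
  · rw [if_neg (by simp; linarith), add_sub_cancel_left]


lemma basePath_len (x X : Plane) (hX : ‖X‖ = 1) : (basePath x X hX).len = 0 := rfl
lemma basePath_toFun (x X : Plane) (hX : ‖X‖ = 1) (t : ℝ) :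
    (basePath x X hX).toFun t = x := rfl
lemma basePath_dir (x X : Plane) (hX : ‖X‖ = 1) (t : ℝ) :
    (basePath x X hX).dir t = X := rfl

end CCCaux

open CCCaux Real in
/-- CCC paths (three unit-circle arcs with alternating orientations, all of positive
length) whose middle arc has length at most π are not length minimisers. -/
theorem ccc_short_middle_not_minimiser (x y X Y : Plane) (hX : ‖X‖ = 1) (hY : ‖Y‖ = 1)
    (γ : BCPath) (hγ : InGamma γ x X y Y)
    (t₁ t₂ ε : ℝ)
    (h01 : 0 < t₁) (h12 : t₁ < t₂) (h23 : t₂ < γ.len)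
    (hε : ε = 1 ∨ ε = -1)
    (hc1 : ArcOn γ ε 0 t₁) (hc2 : ArcOn γ (-ε) t₁ t₂) (hc3 : ArcOn γ ε t₂ γ.len)
    (hmid : t₂ - t₁ ≤ Real.pi) :
    ∃ β : BCPath, InGamma β x X y Y ∧ β.len < γ.len := by
  obtain ⟨hx0, hX0, hxl, hXl⟩ := hγ
  have hεabs : |ε| = 1 := by rcases hε with h | h <;> rw [h] <;> norm_num
  have hnεabs : |(-ε)| = 1 := by rw [abs_neg, hεabs]
  have h0abs : |(0:ℝ)| ≤ 1 := by norm_num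
  have hlen0 : 0 ≤ γ.len := γ.len_nonneg
  -- parameters of the construction
  set q : ℝ := (t₂ - t₁) / 2 with hqdef
  have hqpos : 0 < q := by rw [hqdef]; linarith
  have hqle : q ≤ Real.pi / 2 := by rw [hqdef]; linarith
  set η : ℝ := min t₁ (min (γ.len - t₂) q) / 2 with hηdef
  have hηpos : 0 < η := by
    rw [hηdef]
    have : 0 < min t₁ (min (γ.len - t₂) q) := lt_min h01 (lt_min (by linarith) hqpos)
    linarith
  have hηt₁ : η < t₁ := by
    have h1 : min t₁ (min (γ.len - t₂) q) ≤ t₁ := min_le_left _ _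
    rw [hηdef]; linarith
  have hηs : η < γ.len - t₂ := by
    have h1 : min t₁ (min (γ.len - t₂) q) ≤ γ.len - t₂ :=
      le_trans (min_le_right _ _) (min_le_left _ _)
    rw [hηdef]; linarith
  have hηq : η < q := by
    have h1 : min t₁ (min (γ.len - t₂) q) ≤ q :=
      le_trans (min_le_right _ _) (min_le_right _ _)
    rw [hηdef]; linarith
  clear_value η
  clear hηdef
  have hδpos : 0 < q - η := by linarith
  have hLseg0 : 0 ≤ 4 * (Real.sin q - Real.sin (q - η)) := by
    have := Real.sin_le_sin_of_le_of_le_pi_div_two (x := q - η) (y := q)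
      (by linarith [Real.pi_pos]) hqle (by linarith)
    linarith
  have hLseg4 : 4 * (Real.sin q - Real.sin (q - η)) < 4 * η := by
    have hss : Real.sin q - Real.sin (q - η) =
        2 * Real.sin (η / 2) * Real.cos (q - η / 2) := by
      rw [Real.sin_sub_sin, show (q - (q - η)) / 2 = η / 2 by ring,
        show (q + (q - η)) / 2 = q - η / 2 by ring]
    have h1 : Real.sin (η / 2) < η / 2 := Real.sin_lt (by linarith)
    have h2 : Real.cos (q - η / 2) ≤ 1 := Real.cos_le_one _
    have h3 : 0 < Real.sin (η / 2) := Real.sin_pos_of_pos_of_lt_pi (by linarith)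
      (by linarith [Real.pi_gt_three])
    nlinarith
  -- explicit description of γ
  have hsub1 : Icc (0:ℝ) t₁ ⊆ Icc 0 γ.len := Icc_subset_Icc (le_refl 0) (by linarith)
  have hsub2 : Icc t₁ t₂ ⊆ Icc 0 γ.len := Icc_subset_Icc (by linarith) (by linarith)
  have hsub3 : Icc t₂ γ.len ⊆ Icc 0 γ.len := Icc_subset_Icc (by linarith) (le_refl _)
  have hd1 : γ.dir t₁ = Rot (ε * t₁) X := by
    have := dir_arc (le_of_lt h01) hsub1 hc1 t₁ ⟨le_of_lt h01, le_refl _⟩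
    rwa [hX0, sub_zero] at this
  have hd2 : γ.dir t₂ = Rot (-ε * (t₂ - t₁) + ε * t₁) X := by
    have := dir_arc (le_of_lt h12) hsub2 hc2 t₂ ⟨le_of_lt h12, le_refl _⟩
    rw [hd1, Rot_Rot] at this
    exact this
  have hdY : Y = Rot (ε * (γ.len - t₂) + (-ε * (t₂ - t₁) + ε * t₁)) X := by
    have := dir_arc (le_of_lt h23) hsub3 hc3 γ.len ⟨le_of_lt h23, le_refl _⟩
    rw [hd2, Rot_Rot, hXl] at this
    exact this
  have hp1 : γ.toFun t₁ = x + arcPos ε t₁ X := by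
    have := pos_arc (le_of_lt h01) hsub1 hc1 t₁ ⟨le_of_lt h01, le_refl _⟩
    rwa [hx0, hX0, sub_zero] at this
  have hp2 : γ.toFun t₂ = x + arcPos ε t₁ X + arcPos (-ε) (t₂ - t₁) (Rot (ε * t₁) X) := by
    have := pos_arc (le_of_lt h12) hsub2 hc2 t₂ ⟨le_of_lt h12, le_refl _⟩
    rwa [hp1, hd1] at this
  have hpy : y = x + arcPos ε t₁ X + arcPos (-ε) (t₂ - t₁) (Rot (ε * t₁) X) +
      arcPos ε (γ.len - t₂) (Rot (-ε * (t₂ - t₁) + ε * t₁) X) := by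
    have := pos_arc (le_of_lt h23) hsub3 hc3 γ.len ⟨le_of_lt h23, le_refl _⟩
    rwa [hp2, hd2, hxl] at this
  -- the competitor path
  set P1 := extend (basePath x X hX) ε (t₁ - η) (by linarith) (le_of_eq hεabs) with hP1
  set P2 := extend P1 (-ε) (q - η) (by linarith) (le_of_eq hnεabs) with hP2
  set P3 := extend P2 0 (4 * (Real.sin q - Real.sin (q - η))) hLseg0 h0abs with hP3
  set P4 := extend P3 (-ε) (q - η) (by linarith) (le_of_eq hnεabs) with hP4
  set P5 := extend P4 ε (γ.len - t₂ - η) (by linarith) (le_of_eq hεabs) with hP5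
  have hl1 : P1.len = 0 + (t₁ - η) := by rw [hP1, extend_len, basePath_len]
  have hl2 : P2.len = 0 + (t₁ - η) + (q - η) := by rw [hP2, extend_len, hl1]
  have hl3 : P3.len = 0 + (t₁ - η) + (q - η) + 4 * (Real.sin q - Real.sin (q - η)) := by
    rw [hP3, extend_len, hl2]
  have hl4 : P4.len = 0 + (t₁ - η) + (q - η) + 4 * (Real.sin q - Real.sin (q - η)) +
      (q - η) := by rw [hP4, extend_len, hl3]
  have hl5 : P5.len = 0 + (t₁ - η) + (q - η) + 4 * (Real.sin q - Real.sin (q - η)) +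
      (q - η) + (γ.len - t₂ - η) := by rw [hP5, extend_len, hl4]
  -- endpoint data of the competitor
  have he1p : P1.toFun P1.len = x + arcPos ε (t₁ - η) X := by
    rw [hP1, extend_len, extend_end_pos, basePath_len, basePath_toFun, basePath_dir]
  have he1d : P1.dir P1.len = Rot (ε * (t₁ - η)) X := by
    rw [hP1, extend_len, extend_end_dir, basePath_dir]
  have he2p : P2.toFun P2.len = x + arcPos ε (t₁ - η) X +
      arcPos (-ε) (q - η) (Rot (ε * (t₁ - η)) X) := by
    rw [hP2, extend_len, extend_end_pos, he1p, he1d]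
  have he2d : P2.dir P2.len = Rot (-ε * (q - η) + ε * (t₁ - η)) X := by
    rw [hP2, extend_len, extend_end_dir, he1d, Rot_Rot]
  have he3p : P3.toFun P3.len = x + arcPos ε (t₁ - η) X +
      arcPos (-ε) (q - η) (Rot (ε * (t₁ - η)) X) +
      arcPos 0 (4 * (Real.sin q - Real.sin (q - η)))
        (Rot (-ε * (q - η) + ε * (t₁ - η)) X) := by
    rw [hP3, extend_len, extend_end_pos, he2p, he2d]
  have he3d : P3.dir P3.len = Rot (0 * (4 * (Real.sin q - Real.sin (q - η))) +
      (-ε * (q - η) + ε * (t₁ - η))) X := by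
    rw [hP3, extend_len, extend_end_dir, he2d, Rot_Rot]
  have he4p : P4.toFun P4.len = x + arcPos ε (t₁ - η) X +
      arcPos (-ε) (q - η) (Rot (ε * (t₁ - η)) X) +
      arcPos 0 (4 * (Real.sin q - Real.sin (q - η)))
        (Rot (-ε * (q - η) + ε * (t₁ - η)) X) +
      arcPos (-ε) (q - η) (Rot (0 * (4 * (Real.sin q - Real.sin (q - η))) +
        (-ε * (q - η) + ε * (t₁ - η))) X) := by
    rw [hP4, extend_len, extend_end_pos, he3p, he3d]
  have he4d : P4.dir P4.len = Rot (-ε * (q - η) +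
      (0 * (4 * (Real.sin q - Real.sin (q - η))) + (-ε * (q - η) + ε * (t₁ - η)))) X := by
    rw [hP4, extend_len, extend_end_dir, he3d, Rot_Rot]
  have he5p : P5.toFun P5.len = x + arcPos ε (t₁ - η) X +
      arcPos (-ε) (q - η) (Rot (ε * (t₁ - η)) X) +
      arcPos 0 (4 * (Real.sin q - Real.sin (q - η)))
        (Rot (-ε * (q - η) + ε * (t₁ - η)) X) +
      arcPos (-ε) (q - η) (Rot (0 * (4 * (Real.sin q - Real.sin (q - η))) +
        (-ε * (q - η) + ε * (t₁ - η))) X) +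
      arcPos ε (γ.len - t₂ - η) (Rot (-ε * (q - η) +
        (0 * (4 * (Real.sin q - Real.sin (q - η))) + (-ε * (q - η) + ε * (t₁ - η)))) X) := by
    rw [hP5, extend_len, extend_end_pos, he4p, he4d]
  have he5d : P5.dir P5.len = Rot (ε * (γ.len - t₂ - η) + (-ε * (q - η) +
      (0 * (4 * (Real.sin q - Real.sin (q - η))) + (-ε * (q - η) + ε * (t₁ - η))))) X := by
    rw [hP5, extend_len, extend_end_dir, he4d, Rot_Rot]
  -- start data of the competitor
  have hst1 : (0:ℝ) ≤ P1.len := by rw [hl1]; linarith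
  have hst2 : (0:ℝ) ≤ P2.len := by rw [hl2]; linarith
  have hst3 : (0:ℝ) ≤ P3.len := by rw [hl3]; linarith [hLseg0]
  have hst4 : (0:ℝ) ≤ P4.len := by rw [hl4]; linarith [hLseg0]
  have hs0p : P5.toFun 0 = x := by
    rw [hP5, extend_toFun_of_le _ _ _ _ _ hst4, hP4, extend_toFun_of_le _ _ _ _ _ hst3,
      hP3, extend_toFun_of_le _ _ _ _ _ hst2, hP2, extend_toFun_of_le _ _ _ _ _ hst1,
      hP1, extend_toFun_of_le _ _ _ _ _ (le_of_eq (basePath_len x X hX).symm),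
      basePath_toFun]
  have hs0d : P5.dir 0 = X := by
    rw [hP5, extend_dir_of_le _ _ _ _ _ hst4, hP4, extend_dir_of_le _ _ _ _ _ hst3,
      hP3, extend_dir_of_le _ _ _ _ _ hst2, hP2, extend_dir_of_le _ _ _ _ _ hst1,
      hP1, extend_dir_of_le _ _ _ _ _ (le_of_eq (basePath_len x X hX).symm),
      basePath_dir]
  refine ⟨P5, ⟨hs0p, hs0d, ?_, ?_⟩, ?_⟩
  · -- final position
    rw [he5p, hpy]
    have h2q : t₂ - t₁ = 2 * q := by rw [hqdef]; ring
    rw [h2q]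
    rcases hε with h1 | h1 <;> subst h1
    · simp only [arcPos, one_ne_zero, if_false, neg_eq_zero, if_true, eq_self_iff_true,
        inv_one, one_smul, J_Rot, Rot_Rot, one_mul, neg_mul, zero_mul, neg_neg, inv_neg,
        neg_smul, zero_add, ite_false, ite_true]
      rw [show γ.len - t₂ - η + (-(q - η) + (-(q - η) + (t₁ - η))) =
            γ.len - t₂ + (-(2 * q) + t₁) from by ring,
        show (-(q - η) + (-(q - η) + (t₁ - η))) = t₁ - 2 * q + η from by ring,
        show (-(q - η) + (t₁ - η)) = t₁ - q from by ring]
      have c1 : Real.cos (t₁ - η) = Real.cos (t₁ - q) * Real.cos (q - η) -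
          Real.sin (t₁ - q) * Real.sin (q - η) := by
        rw [← Real.cos_add]; congr 1; ring
      have s1 : Real.sin (t₁ - η) = Real.sin (t₁ - q) * Real.cos (q - η) +
          Real.cos (t₁ - q) * Real.sin (q - η) := by
        rw [← Real.sin_add]; congr 1; ring
      have c2 : Real.cos (t₁ - 2 * q + η) = Real.cos (t₁ - q) * Real.cos (q - η) +
          Real.sin (t₁ - q) * Real.sin (q - η) := by
        rw [← Real.cos_sub]; congr 1; ring
      have s2 : Real.sin (t₁ - 2 * q + η) = Real.sin (t₁ - q) * Real.cos (q - η) -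
          Real.cos (t₁ - q) * Real.sin (q - η) := by
        rw [← Real.sin_sub]; congr 1; ring
      have c3 : Real.cos t₁ = Real.cos (t₁ - q) * Real.cos q -
          Real.sin (t₁ - q) * Real.sin q := by
        rw [← Real.cos_add]; congr 1; ring
      have s3 : Real.sin t₁ = Real.sin (t₁ - q) * Real.cos q +
          Real.cos (t₁ - q) * Real.sin q := by
        rw [← Real.sin_add]; congr 1; ring
      have c4 : Real.cos (-(2 * q) + t₁) = Real.cos (t₁ - q) * Real.cos q +
          Real.sin (t₁ - q) * Real.sin q := by
        rw [← Real.cos_sub]; congr 1; ring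
      have s4 : Real.sin (-(2 * q) + t₁) = Real.sin (t₁ - q) * Real.cos q -
          Real.cos (t₁ - q) * Real.sin q := by
        rw [← Real.sin_sub]; congr 1; ring
      simp only [Rot, J_J, smul_neg, smul_add, smul_sub, smul_smul]
      match_scalars
      all_goals simp only [c1, s1, c2, s2, c3, s3, c4, s4]
      all_goals ring
    · simp only [arcPos, one_ne_zero, if_false, neg_eq_zero, if_true, eq_self_iff_true,
        inv_one, one_smul, J_Rot, Rot_Rot, one_mul, neg_mul, zero_mul, neg_neg, inv_neg,
        neg_smul, zero_add, ite_false, ite_true]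
      rw [show -(γ.len - t₂ - η) + (q - η + (q - η + -(t₁ - η))) =
            -(γ.len - t₂) + (2 * q + -t₁) from by ring,
        show (q - η + (q - η + -(t₁ - η))) = 2 * q - η - t₁ from by ring,
        show (q - η + -(t₁ - η)) = q - t₁ from by ring]
      have c1 : Real.cos (-(t₁ - η)) = Real.cos (q - t₁) * Real.cos (q - η) +
          Real.sin (q - t₁) * Real.sin (q - η) := by
        rw [← Real.cos_sub]; congr 1; ring
      have s1 : Real.sin (-(t₁ - η)) = Real.sin (q - t₁) * Real.cos (q - η) -
          Real.cos (q - t₁) * Real.sin (q - η) := by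
        rw [← Real.sin_sub]; congr 1; ring
      have c2 : Real.cos (2 * q - η - t₁) = Real.cos (q - t₁) * Real.cos (q - η) -
          Real.sin (q - t₁) * Real.sin (q - η) := by
        rw [← Real.cos_add]; congr 1; ring
      have s2 : Real.sin (2 * q - η - t₁) = Real.sin (q - t₁) * Real.cos (q - η) +
          Real.cos (q - t₁) * Real.sin (q - η) := by
        rw [← Real.sin_add]; congr 1; ring
      have c3 : Real.cos (-t₁) = Real.cos (q - t₁) * Real.cos q +
          Real.sin (q - t₁) * Real.sin q := by
        rw [← Real.cos_sub]; congr 1; ring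
      have s3 : Real.sin (-t₁) = Real.sin (q - t₁) * Real.cos q -
          Real.cos (q - t₁) * Real.sin q := by
        rw [← Real.sin_sub]; congr 1; ring
      have c4 : Real.cos (2 * q + -t₁) = Real.cos (q - t₁) * Real.cos q -
          Real.sin (q - t₁) * Real.sin q := by
        rw [← Real.cos_add]; congr 1; ring
      have s4 : Real.sin (2 * q + -t₁) = Real.sin (q - t₁) * Real.cos q +
          Real.cos (q - t₁) * Real.sin q := by
        rw [← Real.sin_add]; congr 1; ring
      simp only [Rot, J_J, smul_neg, smul_add, smul_sub, smul_smul]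
      match_scalars
      all_goals simp only [c1, s1, c2, s2, c3, s3, c4, s4]
      all_goals ring
  · -- final direction
    rw [he5d, hdY]
    congr 1
    ring
  · -- length
    rw [hl5]
    have h2q : 2 * q = t₂ - t₁ := by rw [hqdef]; ring
    linarith [hLseg4]
end
end

section
/- (Fragments are confined to the region R) Let γ : [0,s] → ℝ² be a bounded curvature path with s < 1 (a fragment), γ(0) = (0,0) and γ'(0) = (1,0). Then for every t ∈ [0,s]: ‖γ(t)‖ ≤ 1, ‖γ(t) − (0,1)‖ ≥ 1, and ‖γ(t) − (0,−1)‖ ≥ 1. That is, γ remains in the closed unit disk centered at the origin and outside the open unit disks bounded by the two adjacent circles (the unit circles tangent to the initial direction, centered at (0,1) and (0,−1)). -/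
open Set
open scoped RealInnerProductSpace

noncomputable section

/-- The point (a, b) of the plane. -/
def pt (a b : ℝ) : Plane := WithLp.toLp 2 ![a, b]

lemma confined_aux (γ : BCPath) (hfrag : γ.len < 1) (c : Plane)
    (hnorm : ‖γ.toFun 0 - c‖ = 1)
    (hperp : ⟪γ.toFun 0 - c, γ.dir 0⟫ = 0) :
    ∀ t ∈ Icc 0 γ.len, 1 ≤ ‖γ.toFun t - c‖ := by
  set s := γ.len with hsdef
  set I : Set ℝ := Icc (0:ℝ) s with hIdef
  have hIconv : Convex ℝ I := convex_Icc _ _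
  set f : ℝ → ℝ := fun t => ⟪γ.toFun t - c, γ.toFun t - c⟫ - 1 with hfdef
  set g : ℝ → ℝ := fun t => 2 * ⟪γ.toFun t - c, γ.dir t⟫ with hgdef
  have hcos : ∀ t ∈ I, 0 < Real.cos t := by
    intro t ht
    apply Real.cos_pos_of_mem_Ioo
    constructor
    · nlinarith [Real.pi_gt_three, ht.1]
    · nlinarith [Real.pi_gt_three, ht.2, hfrag]
  have hf' : ∀ t ∈ I, HasDerivWithinAt f (g t) I t := by
    intro t ht
    have h1 := (γ.hasDeriv t ht).sub_const c
    have h2 := (h1.inner ℝ h1).sub_const 1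
    refine HasDerivWithinAt.congr_deriv h2 ?_
    simp only [hgdef]
    linarith [real_inner_comm (γ.dir t) (γ.toFun t - c)]
  have hcontFun : ContinuousOn γ.toFun I := fun t ht => (γ.hasDeriv t ht).continuousWithinAt
  have hcontSub : ContinuousOn (fun t => γ.toFun t - c) I := hcontFun.sub continuousOn_const
  have hcontf : ContinuousOn f I := (hcontSub.inner hcontSub).sub continuousOn_const
  have hcontg : ContinuousOn g I := continuousOn_const.mul (hcontSub.inner γ.contDir)
  set P : ℝ → ℝ := fun t => g t * Real.cos t + f t * Real.sin t with hPdef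
  have hcontP : ContinuousOn P I :=
    (hcontg.mul Real.continuous_cos.continuousOn).add (hcontf.mul Real.continuous_sin.continuousOn)
  have hfx : ∀ x ∈ Ioo (0:ℝ) s, HasDerivAt f (g x) x := by
    intro x hx
    exact (hf' x (Ioo_subset_Icc_self hx)).hasDerivAt (Icc_mem_nhds hx.1 hx.2)
  obtain ⟨n, u, hu0, hun, humono, hpieces⟩ := γ.piecewiseC2
  have hchain : ∀ i j : ℕ, i ≤ j → j ≤ n → u i ≤ u j := by
    intro i j hij hjn
    induction j, hij using Nat.le_induction with
    | base => exact le_rfl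
    | succ k hk ih => exact le_trans (ih (by omega)) (humono k (by omega))
  have hu_mem : ∀ i ≤ n, u i ∈ I := by
    intro i hi
    constructor
    · rw [← hu0]; exact hchain 0 i (Nat.zero_le i) hi
    · rw [hsdef, ← hun]; exact hchain i n hi le_rfl
  have hPmono : ∀ i, i < n → MonotoneOn P (Icc (u i) (u (i+1))) := by
    intro i hin
    obtain ⟨acc, hacc_cont, hacc⟩ := hpieces i hin
    have hsub : Icc (u i) (u (i+1)) ⊆ I :=
      Icc_subset_Icc (hu_mem i hin.le).1 (hu_mem (i+1) hin).2
    apply monotoneOn_of_hasDerivWithinAt_nonneg (convex_Icc _ _) (hcontP.mono hsub)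
      (f' := fun x => (2 * (⟪γ.toFun x - c, acc x⟫ + ⟪γ.dir x, γ.dir x⟫) + f x) * Real.cos x
        + (g x * Real.sin x - g x * Real.sin x))
    · intro x hx
      rw [interior_Icc] at hx
      have hxI : x ∈ Ioo (0:ℝ) s :=
        ⟨lt_of_le_of_lt (hu_mem i hin.le).1 hx.1, lt_of_lt_of_le hx.2 (hu_mem (i+1) hin).2⟩
      have hfd := hfx x hxI
      have hddir : HasDerivAt γ.dir (acc x) x :=
        ((hacc x (Ioo_subset_Icc_self hx)).1).hasDerivAt (Icc_mem_nhds hx.1 hx.2)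
      have htf : HasDerivAt γ.toFun (γ.dir x) x :=
        (γ.hasDeriv x (Ioo_subset_Icc_self hxI)).hasDerivAt (Icc_mem_nhds hxI.1 hxI.2)
      have hg' : HasDerivAt g (2 * (⟪γ.toFun x - c, acc x⟫ + ⟪γ.dir x, γ.dir x⟫)) x :=
        ((htf.sub_const c).inner ℝ hddir).const_mul (2:ℝ)
      have hP' := (hg'.mul (Real.hasDerivAt_cos x)).add (hfd.mul (Real.hasDerivAt_sin x))
      have : HasDerivAt P ((2 * (⟪γ.toFun x - c, acc x⟫ + ⟪γ.dir x, γ.dir x⟫) + f x)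
          * Real.cos x + (g x * Real.sin x - g x * Real.sin x)) x := by
        refine HasDerivAt.congr_deriv hP' ?_
        ring
      exact this.hasDerivWithinAt
    · intro x hx
      rw [interior_Icc] at hx
      have hxI : x ∈ I := hsub (Ioo_subset_Icc_self hx)
      have hdir1 : ⟪γ.dir x, γ.dir x⟫ = 1 := by
        rw [real_inner_self_eq_norm_sq, γ.unitSpeed x hxI]; norm_num
      have hip := abs_real_inner_le_norm (γ.toFun x - c) (acc x)
      have haccn : ‖acc x‖ ≤ 1 := (hacc x (Ioo_subset_Icc_self hx)).2
      have hfval : f x = ‖γ.toFun x - c‖^2 - 1 := by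
        simp only [hfdef]; rw [real_inner_self_eq_norm_sq]
      have hnn : 0 ≤ ‖γ.toFun x - c‖ := norm_nonneg _
      have hcosx : 0 ≤ Real.cos x := (hcos x hxI).le
      have habs : |⟪γ.toFun x - c, acc x⟫| ≤ ‖γ.toFun x - c‖ := by
        calc |⟪γ.toFun x - c, acc x⟫| ≤ ‖γ.toFun x - c‖ * ‖acc x‖ := hip
        _ ≤ ‖γ.toFun x - c‖ * 1 := by nlinarith
        _ = ‖γ.toFun x - c‖ := by ring
      have hlb : -‖γ.toFun x - c‖ ≤ ⟪γ.toFun x - c, acc x⟫ := by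
        have := neg_abs_le (⟪γ.toFun x - c, acc x⟫)
        linarith
      have hkey : 0 ≤ 2 * (⟪γ.toFun x - c, acc x⟫ + ⟪γ.dir x, γ.dir x⟫) + f x := by
        rw [hdir1, hfval]
        nlinarith [sq_nonneg (‖γ.toFun x - c‖ - 1)]
      have : (0:ℝ) ≤ (2 * (⟪γ.toFun x - c, acc x⟫ + ⟪γ.dir x, γ.dir x⟫) + f x) * Real.cos x :=
        mul_nonneg hkey hcosx
      linarith
  have hP0 : P 0 = 0 := by
    rw [hPdef, hgdef]
    simp [hperp]
  have hPn : ∀ i, i ≤ n → ∀ t ∈ Icc (0:ℝ) (u i), 0 ≤ P t := by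
    intro i
    induction i with
    | zero =>
      intro _ t ht
      rw [hu0] at ht
      have : t = 0 := le_antisymm ht.2 ht.1
      rw [this, hP0]
    | succ k ih =>
      intro hk t ht
      by_cases hle : t ≤ u k
      · exact ih (by omega) t ⟨ht.1, hle⟩
      · push_neg at hle
        have hk' : k < n := hk
        have h1 : 0 ≤ P (u k) := ih (by omega) (u k) ⟨(hu_mem k (by omega)).1, le_rfl⟩
        have h2 := hPmono k hk' ⟨le_rfl, humono k hk'⟩ ⟨hle.le, ht.2⟩ hle.le
        linarith
  have hPnonneg : ∀ t ∈ I, 0 ≤ P t := by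
    intro t ht
    exact hPn n le_rfl t (by rwa [hun])
  have hQmono : MonotoneOn (fun t => f t / Real.cos t) I := by
    apply monotoneOn_of_hasDerivWithinAt_nonneg hIconv
      (hcontf.div Real.continuous_cos.continuousOn (fun t ht => (hcos t ht).ne'))
      (f' := fun x => P x / (Real.cos x)^2)
    · intro x hx
      rw [interior_Icc] at hx
      have hfd := hfx x hx
      have hcosx : Real.cos x ≠ 0 := (hcos x (Ioo_subset_Icc_self hx)).ne'
      have hdiv := hfd.div (Real.hasDerivAt_cos x) hcosx
      have heq : (g x * Real.cos x - f x * (-Real.sin x)) / Real.cos x ^ 2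
          = P x / (Real.cos x)^2 := by
        rw [hPdef]; ring_nf
      rw [heq] at hdiv
      exact hdiv.hasDerivWithinAt
    · intro x hx
      rw [interior_Icc] at hx
      exact div_nonneg (hPnonneg x (Ioo_subset_Icc_self hx)) (sq_nonneg _)
  intro t ht
  have hf0 : f 0 = 0 := by
    simp only [hfdef]; rw [real_inner_self_eq_norm_sq, hnorm]; norm_num
  have h0I : (0:ℝ) ∈ I := ⟨le_rfl, γ.len_nonneg⟩
  have hmon := hQmono h0I ht ht.1
  simp only [Real.cos_zero, hf0] at hmon
  have hcost := hcos t ht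
  have hft : 0 ≤ f t := by
    have hdivnn : 0 ≤ f t / Real.cos t := by simpa using hmon
    by_contra hneg
    push_neg at hneg
    exact absurd hdivnn (not_le.mpr (div_neg_of_neg_of_pos hneg hcost))
  have hfval : f t = ‖γ.toFun t - c‖^2 - 1 := by
    simp only [hfdef]; rw [real_inner_self_eq_norm_sq]
  rw [hfval] at hft
  nlinarith [norm_nonneg (γ.toFun t - c)]


lemma pt_zero : (pt 0 0 : Plane) = 0 := by
  ext i; fin_cases i <;> simp [pt]

lemma norm_pt_sub (a b : ℝ) : ‖(pt 0 0 : Plane) - pt a b‖ = Real.sqrt (a^2 + b^2) := by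
  rw [EuclideanSpace.norm_eq]
  simp [Fin.sum_univ_two, pt, Real.norm_eq_abs, sq_abs]

lemma inner_pt (a b : ℝ) : ⟪(pt 0 0 : Plane) - pt a b, (pt 1 0 : Plane)⟫ = -a := by
  simp [PiLp.inner_apply, Fin.sum_univ_two, pt]

/-- A fragment starting at the origin with direction (1,0) is confined to the region
R: it stays in the closed unit disk centered at the origin and outside the open unit
disks centered at (0,1) and (0,−1) (bounded by the adjacent circles). -/
theorem fragment_confined (γ : BCPath) (hfrag : γ.len < 1)
    (h0 : γ.toFun 0 = pt 0 0) (hd : γ.dir 0 = pt 1 0) :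
    ∀ t ∈ Icc 0 γ.len, ‖γ.toFun t‖ ≤ 1 ∧
      1 ≤ ‖γ.toFun t - pt 0 1‖ ∧
      1 ≤ ‖γ.toFun t - pt 0 (-1)‖ := by
  intro t ht
  refine ⟨?_, ?_, ?_⟩
  · have hlip := Convex.norm_image_sub_le_of_norm_hasDerivWithin_le γ.hasDeriv
      (fun x hx => le_of_eq (γ.unitSpeed x hx)) (convex_Icc _ _)
      (⟨le_rfl, γ.len_nonneg⟩ : (0:ℝ) ∈ Icc 0 γ.len) ht
    rw [h0, pt_zero, sub_zero] at hlip
    have : ‖t - 0‖ = t := by rw [sub_zero, Real.norm_eq_abs, abs_of_nonneg ht.1]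
    rw [this, one_mul] at hlip
    linarith [ht.2]
  · refine confined_aux γ hfrag (pt 0 1) ?_ ?_ t ht
    · rw [h0, norm_pt_sub]; norm_num
    · rw [h0, hd, inner_pt]; norm_num
  · refine confined_aux γ hfrag (pt 0 (-1)) ?_ ?_ t ht
    · rw [h0, norm_pt_sub]; norm_num
    · rw [h0, hd, inner_pt]; norm_num
end
end

section
/- (A negative direction forces length greater than π/2) Let γ : [0,s] → ℝ² be a bounded curvature path, and suppose γ has a negative direction, i.e. there exists t ∈ [0,s] with ⟨γ'(0), γ'(t)⟩ < 0. Then s > π/2. -/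
open Set

noncomputable section

namespace NDAux

/-- Identify the plane with ℂ. -/
def toC (v : Plane) : ℂ := ⟨v 0, v 1⟩

lemma abs_toC (v : Plane) : ‖toC v‖ = ‖v‖ := by
  rw [EuclideanSpace.norm_eq, Complex.norm_def, Fin.sum_univ_two]
  simp [toC, Complex.normSq_mk, Real.norm_eq_abs, sq_abs]
  ring_nf

lemma toC_sub (v w : Plane) : toC v - toC w = toC (v - w) := by
  apply Complex.ext <;> simp [toC]

lemma inner_eq (v w : Plane) :
    (inner ℝ v w : ℝ) = (toC v).re * (toC w).re + (toC v).im * (toC w).im := by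
  simp [PiLp.inner_apply, RCLike.inner_apply, Fin.sum_univ_two, toC]
  try ring

/-- Subadditivity of |arg| under multiplication. -/
lemma abs_arg_mul_le {z w : ℂ} (hz : z ≠ 0) (hw : w ≠ 0) :
    |Complex.arg (z * w)| ≤ |Complex.arg z| + |Complex.arg w| := by
  by_cases h : Complex.arg z + Complex.arg w ∈ Set.Ioc (-Real.pi) Real.pi
  · rw [Complex.arg_mul hz hw h]; exact abs_add_le _ _
  · have h1 := Complex.abs_arg_le_pi (z * w)
    have h2 : Real.pi ≤ |Complex.arg z + Complex.arg w| := by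
      simp only [Set.mem_Ioc, not_and_or, not_lt, not_le] at h
      rcases h with h | h
      · rw [abs_of_nonpos (by linarith [Real.pi_pos])]; linarith
      · rw [abs_of_pos (by linarith [Real.pi_pos])]; linarith
    calc |Complex.arg (z * w)| ≤ Real.pi := h1
      _ ≤ |Complex.arg z + Complex.arg w| := h2
      _ ≤ |Complex.arg z| + |Complex.arg w| := abs_add_le _ _

/-- If a unit complex number has real part at least `1 - 2x²`, its argument is
at most `2 arcsin x`. -/
lemma abs_arg_le_of_re_ge {ζ : ℂ} {x : ℝ} (hζ : ‖ζ‖ = 1)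
    (hx0 : 0 ≤ x) (hx1 : x ≤ 1) (hre : 1 - 2 * x ^ 2 ≤ ζ.re) :
    |Complex.arg ζ| ≤ 2 * Real.arcsin x := by
  have hζ0 : ζ ≠ 0 := by intro h; rw [h] at hζ; simp at hζ
  have hcos : Real.cos (Complex.arg ζ) = ζ.re := by
    rw [Complex.cos_arg hζ0, hζ, div_one]
  have hsin : Real.sin (Real.arcsin x) = x := Real.sin_arcsin (by linarith) hx1
  have hB0 : 0 ≤ 2 * Real.arcsin x := by
    have := Real.arcsin_nonneg.2 hx0; linarith
  have hcosB : Real.cos (2 * Real.arcsin x) = 1 - 2 * x ^ 2 := by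
    have h := Real.cos_two_mul (Real.arcsin x)
    have h2 := Real.sin_sq_add_cos_sq (Real.arcsin x)
    nlinarith [hsin]
  by_contra hgt
  push_neg at hgt
  have hlt : Real.cos |Complex.arg ζ| < Real.cos (2 * Real.arcsin x) :=
    Real.cos_lt_cos_of_nonneg_of_le_pi hB0 (Complex.abs_arg_le_pi ζ) hgt
  rw [Real.cos_abs, hcos, hcosB] at hlt
  linarith

/-- One Lipschitz step: bound on the angle between two unit tangent vectors. -/
lemma step_bound {v w : Plane} {x : ℝ} (hv : ‖v‖ = 1) (hw : ‖w‖ = 1)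
    (hx0 : 0 ≤ x) (hx1 : x ≤ 1) (hchord : ‖w - v‖ ≤ 2 * x) :
    |Complex.arg (toC w * (toC v)⁻¹)| ≤ 2 * Real.arcsin x := by
  have hav : ‖toC v‖ = 1 := by rw [abs_toC, hv]
  have haw : ‖toC w‖ = 1 := by rw [abs_toC, hw]
  have habs : ‖toC w * (toC v)⁻¹‖ = 1 := by
    rw [norm_mul, norm_inv, hav, haw]; norm_num
  apply abs_arg_le_of_re_ge habs hx0 hx1
  have hv0 : toC v ≠ 0 := by
    intro h; rw [h] at hav; simp at hav
  have hinv : (toC v)⁻¹ = starRingEnd ℂ (toC v) := Complex.inv_eq_conj hav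
  have hre : (toC w * (toC v)⁻¹).re = (inner ℝ v w : ℝ) := by
    rw [hinv, inner_eq]
    simp [Complex.mul_re, Complex.conj_re, Complex.conj_im]
    ring
  have hns : ‖w - v‖ ^ 2 = 2 - 2 * (inner ℝ v w : ℝ) := by
    rw [norm_sub_sq_real, hv, hw, real_inner_comm]
    ring
  have hsq : ‖w - v‖ ^ 2 ≤ (2 * x) ^ 2 := by
    apply sq_le_sq' _ hchord
    have := norm_nonneg (w - v); linarith
  rw [hre]
  nlinarith

/-- Chaining 1-Lipschitz bounds over consecutive intervals. -/
lemma lip_chain {f : ℝ → Plane} {n : ℕ} {u : ℕ → ℝ}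
    (hmono : ∀ i < n, u i ≤ u (i + 1))
    (hloc : ∀ i < n, ∀ s ∈ Icc (u i) (u (i + 1)), ∀ r ∈ Icc (u i) (u (i + 1)),
      ‖f r - f s‖ ≤ |r - s|) :
    ∀ s r, u 0 ≤ s → s ≤ r → r ≤ u n → ‖f r - f s‖ ≤ r - s := by
  induction n with
  | zero =>
    intro s r h1 h2 h3
    have : s = r := le_antisymm h2 (h3.trans h1)
    simp [this]
  | succ n ih =>
    intro s r h1 h2 h3
    have ih' := ih (fun i hi => hmono i (hi.trans (Nat.lt_succ_self n)))
      (fun i hi => hloc i (hi.trans (Nat.lt_succ_self n)))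
    have hlast : u n ≤ u (n + 1) := hmono n (Nat.lt_succ_self n)
    by_cases hr : r ≤ u n
    · exact ih' s r h1 h2 hr
    · push_neg at hr
      by_cases hs : u n ≤ s
      · have := hloc n (Nat.lt_succ_self n) s ⟨hs, h2.trans h3⟩ r ⟨hs.trans h2, h3⟩
        rwa [abs_of_nonneg (by linarith)] at this
      · push_neg at hs
        have hA : ‖f (u n) - f s‖ ≤ u n - s := ih' s (u n) h1 hs.le le_rfl
        have hB : ‖f r - f (u n)‖ ≤ |r - u n| :=
          hloc n (Nat.lt_succ_self n) (u n) ⟨le_rfl, hlast⟩ r ⟨hr.le, h3⟩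
        rw [abs_of_nonneg (by linarith)] at hB
        have htri : f r - f s = (f r - f (u n)) + (f (u n) - f s) := by abel
        calc ‖f r - f s‖ = ‖(f r - f (u n)) + (f (u n) - f s)‖ := by rw [htri]
          _ ≤ ‖f r - f (u n)‖ + ‖f (u n) - f s‖ := norm_add_le _ _
          _ ≤ (r - u n) + (u n - s) := add_le_add hB hA
          _ = r - s := by ring

end NDAux

/-- If a bounded curvature path has a negative direction (its direction at some time
makes an obtuse angle with the initial direction), then its length exceeds π/2. -/
theorem negative_direction_length (γ : BCPath)
    (hneg : ∃ t ∈ Icc 0 γ.len, (inner ℝ (γ.dir 0) (γ.dir t) : ℝ) < 0) :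
    Real.pi / 2 < γ.len := by
  classical
  obtain ⟨t, ht, hinner⟩ := hneg
  -- dir is 1-Lipschitz on [0, len]
  obtain ⟨n, u, hu0, hun, humono, hpieces⟩ := γ.piecewiseC2
  have hlip : ∀ s r, (0:ℝ) ≤ s → s ≤ r → r ≤ γ.len → ‖γ.dir r - γ.dir s‖ ≤ r - s := by
    have hloc : ∀ i < n, ∀ s ∈ Icc (u i) (u (i + 1)), ∀ r ∈ Icc (u i) (u (i + 1)),
        ‖γ.dir r - γ.dir s‖ ≤ |r - s| := by
      intro i hi s hsmem r hrmem
      obtain ⟨acc, -, hacc⟩ := hpieces i hi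
      have := (convex_Icc (u i) (u (i+1))).norm_image_sub_le_of_norm_hasDerivWithin_le
        (f := γ.dir) (f' := acc)
        (fun x hx => (hacc x hx).1) (fun x hx => (hacc x hx).2) hsmem hrmem
      simpa [Real.norm_eq_abs] using this
    intro s r h1 h2 h3
    exact NDAux.lip_chain humono hloc s r (by rw [hu0]; exact h1) h2 (by rw [hun]; exact h3)
  -- t > 0
  have hdir0 : ‖γ.dir 0‖ = 1 := γ.unitSpeed 0 ⟨le_rfl, γ.len_nonneg⟩
  have htpos : 0 < t := by
    rcases lt_or_eq_of_le ht.1 with h | h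
    · exact h
    · exfalso
      rw [← h] at hinner
      have : (inner ℝ (γ.dir 0) (γ.dir 0) : ℝ) = 1 := by
        rw [real_inner_self_eq_norm_sq, hdir0]; norm_num
      linarith
  -- the angle
  set ζ := NDAux.toC (γ.dir t) * (NDAux.toC (γ.dir 0))⁻¹ with hζdef
  have hdirt : ‖γ.dir t‖ = 1 := γ.unitSpeed t ht
  have hav : ‖NDAux.toC (γ.dir 0)‖ = 1 := by rw [NDAux.abs_toC, hdir0]
  have haw : ‖NDAux.toC (γ.dir t)‖ = 1 := by rw [NDAux.abs_toC, hdirt]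
  have hv0 : NDAux.toC (γ.dir 0) ≠ 0 := by intro h; rw [h] at hav; simp at hav
  have habsζ : ‖ζ‖ = 1 := by
    rw [hζdef, norm_mul, norm_inv, hav, haw]; norm_num
  have hζ0 : ζ ≠ 0 := by intro h; rw [h] at habsζ; simp at habsζ
  have hreζ : ζ.re = (inner ℝ (γ.dir 0) (γ.dir t) : ℝ) := by
    rw [hζdef, Complex.inv_eq_conj hav, NDAux.inner_eq]
    simp [Complex.mul_re, Complex.conj_re, Complex.conj_im]
    ring
  -- π/2 < |arg ζ|
  have hangle : Real.pi / 2 < |Complex.arg ζ| := by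
    by_contra hle
    push_neg at hle
    have : 0 ≤ Real.cos (Complex.arg ζ) := by
      apply Real.cos_nonneg_of_neg_pi_div_two_le_of_le
      · cases abs_le.1 hle; linarith
      · cases abs_le.1 hle; assumption
    rw [Complex.cos_arg hζ0, habsζ, div_one, hreζ] at this
    linarith
  -- |arg ζ| ≤ t via partitions
  have hAk : ∀ k : ℕ, t ≤ 2 * k → |Complex.arg ζ| ≤ k * (2 * Real.arcsin (t / (2 * k))) := by
    intro k hk
    have hk0 : 0 < (k:ℝ) := by
      rcases Nat.eq_zero_or_pos k with rfl | h
      · exfalso; push_cast at hk; linarith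
      · exact_mod_cast h
    set x := t / (2 * k) with hxdef
    have hx0 : 0 ≤ x := by positivity
    have hx1 : x ≤ 1 := by rw [hxdef, div_le_one (by positivity)]; linarith
    -- induction: the angle up to point m*t/k is ≤ m * (2 arcsin x)
    have key : ∀ m : ℕ, m ≤ k →
        |Complex.arg (NDAux.toC (γ.dir (m * t / k)) * (NDAux.toC (γ.dir 0))⁻¹)| ≤
          m * (2 * Real.arcsin x) := by
      intro m hm
      induction m with
      | zero =>
        simp [mul_inv_cancel₀ hv0]
      | succ m ihm =>
        have hm' : m ≤ k := le_of_lt (Nat.lt_of_succ_le hm)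
        have ihm' := ihm hm'
        set p : ℝ := m * t / k with hpdef
        set q : ℝ := (m + 1 : ℕ) * t / k with hqdef
        have hpmem : p ∈ Icc (0:ℝ) γ.len := by
          constructor
          · positivity
          · rw [hpdef]
            have : (m : ℝ) * t / k ≤ t := by
              rw [div_le_iff₀ hk0]
              have : (m : ℝ) ≤ k := by exact_mod_cast hm'
              nlinarith
            linarith [ht.2]
        have hqmem : q ∈ Icc (0:ℝ) γ.len := by
          constructor
          · positivity
          · rw [hqdef]
            have : ((m + 1 : ℕ) : ℝ) * t / k ≤ t := by
              rw [div_le_iff₀ hk0]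
              have : ((m + 1 : ℕ) : ℝ) ≤ k := by exact_mod_cast hm
              nlinarith
            linarith [ht.2]
        have hqp : q = p + 2 * x := by
          rw [hpdef, hqdef, hxdef]
          push_cast
          field_simp
        have hpq : p ≤ q := by rw [hqp]; linarith
        have hchord : ‖γ.dir q - γ.dir p‖ ≤ 2 * x := by
          have := hlip p q hpmem.1 hpq hqmem.2
          rw [hqp] at this ⊢
          linarith
        have hstep := NDAux.step_bound (γ.unitSpeed p hpmem) (γ.unitSpeed q hqmem)
          hx0 hx1 hchord
        have hap : ‖NDAux.toC (γ.dir p)‖ = 1 := by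
          rw [NDAux.abs_toC, γ.unitSpeed p hpmem]
        have haq : ‖NDAux.toC (γ.dir q)‖ = 1 := by
          rw [NDAux.abs_toC, γ.unitSpeed q hqmem]
        have hp0 : NDAux.toC (γ.dir p) ≠ 0 := by intro h; rw [h] at hap; simp at hap
        have hq0 : NDAux.toC (γ.dir q) ≠ 0 := by intro h; rw [h] at haq; simp at haq
        have hsplit : NDAux.toC (γ.dir q) * (NDAux.toC (γ.dir 0))⁻¹ =
            (NDAux.toC (γ.dir q) * (NDAux.toC (γ.dir p))⁻¹) *
              (NDAux.toC (γ.dir p) * (NDAux.toC (γ.dir 0))⁻¹) := by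
          field_simp
          try ring
        have hz1 : NDAux.toC (γ.dir q) * (NDAux.toC (γ.dir p))⁻¹ ≠ 0 :=
          mul_ne_zero hq0 (inv_ne_zero hp0)
        have hz2 : NDAux.toC (γ.dir p) * (NDAux.toC (γ.dir 0))⁻¹ ≠ 0 :=
          mul_ne_zero hp0 (inv_ne_zero hv0)
        calc |Complex.arg (NDAux.toC (γ.dir q) * (NDAux.toC (γ.dir 0))⁻¹)|
            ≤ |Complex.arg (NDAux.toC (γ.dir q) * (NDAux.toC (γ.dir p))⁻¹)| +
              |Complex.arg (NDAux.toC (γ.dir p) * (NDAux.toC (γ.dir 0))⁻¹)| := by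
              rw [hsplit]; exact NDAux.abs_arg_mul_le hz1 hz2
          _ ≤ 2 * Real.arcsin x + m * (2 * Real.arcsin x) := add_le_add hstep ihm'
          _ = ((m + 1 : ℕ) : ℝ) * (2 * Real.arcsin x) := by push_cast; ring
    have hkk := key k le_rfl
    have : ((k : ℝ) * t / k) = t := by field_simp
    rwa [this] at hkk
  -- the bound sequence tends to t
  have hlim : Filter.Tendsto (fun k : ℕ => (k : ℝ) * (2 * Real.arcsin (t / (2 * k))))
      Filter.atTop (nhds t) := by
    have hder : HasDerivAt Real.arcsin 1 0 := by
      have := Real.hasDerivAt_arcsin (by norm_num : (0:ℝ) ≠ -1) (by norm_num : (0:ℝ) ≠ 1)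
      simpa using this
    have hslope : Filter.Tendsto (fun y : ℝ => Real.arcsin y / y) (nhdsWithin 0 {(0:ℝ)}ᶜ)
        (nhds 1) := by
      have := hasDerivAt_iff_tendsto_slope.1 hder
      have heq : (slope Real.arcsin 0) = fun y : ℝ => Real.arcsin y / y := by
        funext y
        simp [slope_def_field, Real.arcsin_zero]
        try ring
      rwa [heq] at this
    have hx : Filter.Tendsto (fun k : ℕ => t / (2 * (k:ℝ))) Filter.atTop
        (nhdsWithin 0 {(0:ℝ)}ᶜ) := by
      rw [tendsto_nhdsWithin_iff]
      constructor
      · have : Filter.Tendsto (fun k : ℕ => (2 * (k:ℝ))) Filter.atTop Filter.atTop := by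
          apply Filter.Tendsto.const_mul_atTop (by norm_num : (0:ℝ) < 2)
          exact tendsto_natCast_atTop_atTop
        exact Filter.Tendsto.div_atTop tendsto_const_nhds this
      · filter_upwards [Filter.eventually_gt_atTop 0] with k hk
        have hk0 : 0 < (k:ℝ) := by exact_mod_cast hk
        simp only [Set.mem_compl_iff, Set.mem_singleton_iff]
        positivity
    have hcomp : Filter.Tendsto
        (fun k : ℕ => Real.arcsin (t / (2 * k)) / (t / (2 * k)))
        Filter.atTop (nhds 1) := hslope.comp hx
    have hmul : Filter.Tendsto
        (fun k : ℕ => t * (Real.arcsin (t / (2 * k)) / (t / (2 * k))))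
        Filter.atTop (nhds (t * 1)) := hcomp.const_mul t
    rw [mul_one] at hmul
    apply hmul.congr'
    filter_upwards [Filter.eventually_gt_atTop 0] with k hk
    have hk0 : 0 < (k:ℝ) := by exact_mod_cast hk
    have hxpos : 0 < t / (2 * (k:ℝ)) := by positivity
    field_simp
  -- conclude |arg ζ| ≤ t
  have hAt : |Complex.arg ζ| ≤ t := by
    apply ge_of_tendsto hlim
    filter_upwards [Filter.eventually_ge_atTop (Nat.ceil t)] with k hk
    apply hAk
    have : t ≤ (k : ℝ) := le_trans (Nat.le_ceil t) (by exact_mod_cast hk)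
    linarith
  linarith [ht.2]
end
end

section
/- (Fragments have no negative direction) Let γ : [0,s] → ℝ² be a bounded curvature path with s < 1 (a fragment). Then for every t ∈ [0,s], ⟨γ'(0), γ'(t)⟩ ≥ 0, where ⟨·,·⟩ is the Euclidean inner product. -/
open Set

noncomputable section

/-- Fragments (bounded curvature paths of length < 1) do not have a negative
direction: the direction never makes an obtuse angle with the initial direction. -/
theorem fragment_no_negative_direction (γ : BCPath) (hfrag : γ.len < 1) :
    ∀ t ∈ Icc 0 γ.len, 0 ≤ (inner ℝ (γ.dir 0) (γ.dir t) : ℝ) := by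
  obtain ⟨n, u, hu0, hun, hmono, hpieces⟩ := γ.piecewiseC2
  -- monotone: u i ≤ u j for i ≤ j ≤ n
  have hmono' : ∀ i j, i ≤ j → j ≤ n → u i ≤ u j := by
    intro i j hij hjn
    induction j with
    | zero => simp_all
    | succ k ih =>
      rcases Nat.eq_or_lt_of_le hij with h | h
      · rw [h]
      · exact le_trans (ih (Nat.lt_succ_iff.mp h) (le_of_lt hjn)) (hmono k hjn)
  -- the key Lipschitz claim
  have key : ∀ i ≤ n, ∀ t ∈ Icc 0 (u i), ‖γ.dir t - γ.dir 0‖ ≤ t := by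
    intro i hin
    induction i with
    | zero =>
      intro t ht
      rw [hu0] at ht
      have : t = 0 := le_antisymm ht.2 ht.1
      simp [this]
    | succ k ih =>
      intro t ht
      have hkn : k < n := hin
      obtain ⟨acc, hacc_cont, hacc⟩ := hpieces k hkn
      by_cases hcase : t ≤ u k
      · exact ih (le_of_lt hkn) t ⟨ht.1, hcase⟩
      · push_neg at hcase
        have huk0 : 0 ≤ u k := by rw [← hu0]; exact hmono' 0 k (Nat.zero_le _) (le_of_lt hkn)
        have htmem : t ∈ Icc (u k) (u (k+1)) := ⟨le_of_lt hcase, ht.2⟩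
        have hukmem : u k ∈ Icc (u k) (u (k+1)) := ⟨le_refl _, hmono k hkn⟩
        have hlip : ‖γ.dir t - γ.dir (u k)‖ ≤ 1 * ‖t - u k‖ := by
          refine Convex.norm_image_sub_le_of_norm_hasDerivWithin_le
            (fun x hx => (hacc x hx).1) (fun x hx => (hacc x hx).2)
            (convex_Icc _ _) hukmem htmem
        have h1 : ‖γ.dir (u k) - γ.dir 0‖ ≤ u k := ih (le_of_lt hkn) (u k) ⟨huk0, le_refl _⟩
        calc ‖γ.dir t - γ.dir 0‖ ≤ ‖γ.dir t - γ.dir (u k)‖ + ‖γ.dir (u k) - γ.dir 0‖ :=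
              norm_sub_le_norm_sub_add_norm_sub _ _ _
          _ ≤ 1 * ‖t - u k‖ + u k := add_le_add hlip h1
          _ = (t - u k) + u k := by
              rw [one_mul, Real.norm_eq_abs, abs_of_nonneg (by linarith [hcase.le])]
          _ = t := by ring
  intro t ht
  have hkey : ‖γ.dir t - γ.dir 0‖ ≤ t := by
    apply key n (le_refl n) t
    rwa [hun]
  have h0 : (0:ℝ) ∈ Icc 0 γ.len := ⟨le_refl _, γ.len_nonneg⟩
  have hn0 : ‖γ.dir 0‖ = 1 := γ.unitSpeed 0 h0
  have hnt : ‖γ.dir t‖ = 1 := γ.unitSpeed t ht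
  have hsq : ‖γ.dir 0 - γ.dir t‖ ^ 2 =
      ‖γ.dir 0‖ ^ 2 - 2 * (inner ℝ (γ.dir 0) (γ.dir t) : ℝ) + ‖γ.dir t‖ ^ 2 :=
    norm_sub_sq_real _ _
  rw [hn0, hnt] at hsq
  have ht1 : t < 1 := lt_of_le_of_lt ht.2 hfrag
  have htsq : ‖γ.dir 0 - γ.dir t‖ ^ 2 ≤ t ^ 2 := by
    rw [norm_sub_rev]
    exact pow_le_pow_left₀ (norm_nonneg _) hkey 2
  nlinarith [ht.1, sq_nonneg t]
end
end
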